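/- arXiv:1901.01385 — 7 statements merged into one kernel-verified Lean document; each statement's English description precedes it below -/
import Mathlib

section
/- Let K be an algebraically closed field, n ≥ 1, and let σ be an effective regular action of T_n = (K^×)^n on F_n = FreeAlgebra K (Fin n) such that there is an integer matrix (m_{ij}) ∈ M_n(ℤ) with: for all t and i, the element σ(t)(z_i) − (∏_j t_j^{m_{ij}}) • z_i has all of its homogeneous components in degrees ≥ 2 (in particular each σ(t)(z_i) has zero constant term and diagonal monomial linear part). Then the matrix (m_{ij}) is nonsingular, i.e., its determinant is nonzero. -/
/-!
If `m.det = 0`, pick `v ≠ 0` with `m *ᵥ v = 0`. Along the one-parameter subgroup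
`t s = (s ^ v j)_j` the diagonal linear part of the action is trivial, so each
`σ (t s) (z_i) - z_i` only has components of degree `≥ 2`. Inductively, once the components of degree `< d` vanish, the
component of degree `d` is an additive function of `s ∈ Kˣ` which, by regularity, is a Laurent
polynomial in `s`; linear independence of the characters `s ↦ s ^ k` over the infinite field `K`
forces it to vanish. Hence the subgroup acts trivially, contradicting effectiveness.
-/

open FreeAlgebra

/-- A torus action `σ` of `(Kˣ)^r` on the free algebra is *regular* if the image of each
generator depends on `t` as a Laurent polynomial with coefficients in the free algebra. -/
def TorusActionIsRegular {K : Type} [Field K] {n r : ℕ}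
    (σ : (Fin r → Kˣ) →* (FreeAlgebra K (Fin n) ≃ₐ[K] FreeAlgebra K (Fin n))) : Prop :=
  ∀ i : Fin n, ∃ a : ((Fin r → ℤ) →₀ FreeAlgebra K (Fin n)),
    ∀ t : Fin r → Kˣ,
      σ t (ι K i) = a.sum fun m c => ((∏ j : Fin r, (t j) ^ (m j) : Kˣ) : K) • c

/-- The submodule of the free algebra consisting of the elements all of whose homogeneous
components (in the standard grading where each generator has degree 1) have degree at least 2. -/
def FreeAlgebra.higherDegree (K : Type) [Field K] (n : ℕ) :
    Submodule K (FreeAlgebra K (Fin n)) :=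
  ⨆ k : {k : ℕ // 2 ≤ k},
    Submodule.span K (Set.range (ι K : Fin n → FreeAlgebra K (Fin n))) ^ (k : ℕ)

open DirectSum

namespace FreeAlgebra

section Grading

variable (R : Type*) [CommSemiring R] (X : Type*)

def grading (k : ℕ) : Submodule R (FreeAlgebra R X) :=
  Submodule.span R (Set.range (ι R)) ^ k

instance : SetLike.GradedMonoid (grading R X) :=
  Submodule.nat_power_gradedMonoid _

variable {R X}

theorem mem_grading_one_of_mem_span {x : FreeAlgebra R X}
    (hx : x ∈ Submodule.span R (Set.range (ι R))) : x ∈ grading R X 1 := by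
  rwa [grading, pow_one]

theorem ι_mem_grading_one (x : X) : ι R x ∈ grading R X 1 :=
  mem_grading_one_of_mem_span (Submodule.subset_span ⟨x, rfl⟩)

variable (R X)

def decomposeAlgHom : FreeAlgebra R X →ₐ[R] ⨁ k, grading R X k :=
  lift R fun x => of (fun k => grading R X k) 1 ⟨ι R x, ι_mem_grading_one x⟩

variable {R X}

theorem decomposeAlgHom_of_mem_span {x : FreeAlgebra R X}
    (hx : x ∈ Submodule.span R (Set.range (ι R))) :
    decomposeAlgHom R X x = of (fun k => grading R X k) 1 ⟨x, mem_grading_one_of_mem_span hx⟩ := by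
  induction hx using Submodule.span_induction with
  | mem x hx =>
    obtain ⟨x, rfl⟩ := hx
    exact lift_ι_apply _ _
  | zero => exact (map_zero _).trans (map_zero _).symm
  | add x y _ _ ihx ihy => rw [map_add, ihx, ihy, ← map_add]; rfl
  | smul a x _ ih => rw [map_smul, ih, ← lof_eq_of R, ← map_smul]; rfl

instance gradedAlgebra : GradedAlgebra (grading R X) :=
  GradedAlgebra.ofAlgHom _ (decomposeAlgHom R X)
    (hom_ext <| funext fun x => by
      simp only [Function.comp_apply, AlgHom.comp_apply, AlgHom.id_apply, decomposeAlgHom,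
        lift_ι_apply, coeAlgHom_of])
    fun k x => by
      obtain ⟨x, hx⟩ := x
      dsimp only
      induction hx using Submodule.pow_induction_on_left' with
      | algebraMap r => rw [AlgHom.commutes, algebraMap_apply]; rfl
      | add x y k _ _ ihx ihy => rw [map_add, ihx, ihy, ← map_add]; rfl
      | mem_mul p hp k x _ ih =>
        rw [map_mul, ih, decomposeAlgHom_of_mem_span hp, of_mul_of]
        exact of_eq_of_gradedMonoid_eq (Sigma.subtype_ext (add_comm _ _) rfl)

end Grading

end FreeAlgebra

namespace GradedAlgebra

section Filtration

variable {R A : Type*} [CommSemiring R] [Semiring A] [Algebra R A] (𝒜 : ℕ → Submodule R A)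

def degreeGE (a : ℕ) : Submodule R A :=
  ⨆ k : {k : ℕ // a ≤ k}, 𝒜 k

variable {𝒜}

theorem le_degreeGE {a k : ℕ} (h : a ≤ k) : 𝒜 k ≤ degreeGE 𝒜 a :=
  le_iSup (fun k : {k : ℕ // a ≤ k} => 𝒜 k) ⟨k, h⟩

theorem degreeGE_antitone : Antitone (degreeGE 𝒜) :=
  fun _ _ h => iSup_le fun k => le_degreeGE (h.trans k.2)

variable [GradedAlgebra 𝒜]

theorem proj_eq_zero_of_mem_degreeGE {a c : ℕ} {x : A} (hx : x ∈ degreeGE 𝒜 a) (hc : c < a) :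
    proj 𝒜 c x = 0 := by
  induction hx using Submodule.iSup_induction' with
  | mem k x hx => rw [proj_apply, decompose_of_mem_ne 𝒜 hx (by omega)]
  | zero => exact map_zero _
  | add x y _ _ ihx ihy => rw [map_add, ihx, ihy, add_zero]

theorem mem_degreeGE_iff {a : ℕ} {x : A} :
    x ∈ degreeGE 𝒜 a ↔ ∀ c < a, proj 𝒜 c x = 0 := by
  classical
  refine ⟨fun hx c hc => proj_eq_zero_of_mem_degreeGE hx hc, fun h => ?_⟩
  rw [← sum_support_decompose 𝒜 x]
  refine Submodule.sum_mem _ fun k _ => ?_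
  rcases le_or_gt a k with hak | hka
  · exact le_degreeGE hak (SetLike.coe_mem _)
  · rw [← proj_apply, h k hka]
    exact Submodule.zero_mem _

theorem mem_degreeGE_succ_iff {a : ℕ} {x : A} :
    x ∈ degreeGE 𝒜 (a + 1) ↔ x ∈ degreeGE 𝒜 a ∧ proj 𝒜 a x = 0 := by
  simp only [mem_degreeGE_iff, Nat.forall_lt_succ_right]

theorem eq_zero_of_forall_mem_degreeGE {x : A} (hx : ∀ a, x ∈ degreeGE 𝒜 a) : x = 0 := by
  apply (decompose 𝒜).injective
  ext c
  rw [← proj_apply, proj_eq_zero_of_mem_degreeGE (hx (c + 1)) c.lt_succ_self, decompose_zero]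
  rfl

theorem mul_mem_degreeGE {a b : ℕ} {x y : A} (hx : x ∈ degreeGE 𝒜 a) (hy : y ∈ degreeGE 𝒜 b) :
    x * y ∈ degreeGE 𝒜 (a + b) := by
  refine (show degreeGE 𝒜 a * degreeGE 𝒜 b ≤ degreeGE 𝒜 (a + b) from ?_)
    (Submodule.mul_mem_mul hx hy)
  rw [degreeGE, Submodule.iSup_mul]
  refine iSup_le fun k => ?_
  rw [degreeGE, Submodule.mul_iSup]
  refine iSup_le fun l => ?_
  exact Submodule.mul_le.mpr fun x hx y hy =>
    le_degreeGE (add_le_add k.2 l.2) (SetLike.mul_mem_graded hx hy)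

end Filtration

end GradedAlgebra

open GradedAlgebra

namespace FreeAlgebra

variable {R X : Type*} [CommRing R]

theorem sub_mem_degreeGE_succ (φ : FreeAlgebra R X →ₐ[R] FreeAlgebra R X)
    (hφ : ∀ x, φ (ι R x) - ι R x ∈ degreeGE (grading R X) 2) {a : ℕ} {y : FreeAlgebra R X}
    (hy : y ∈ degreeGE (grading R X) a) : φ y - y ∈ degreeGE (grading R X) (a + 1) := by
  let D (b : ℕ) := (degreeGE (grading R X) b).comap (φ.toLinearMap - LinearMap.id)
  have hspan : Submodule.span R (Set.range (ι R)) ≤ D 2 :=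
    Submodule.span_le.mpr <| Set.range_subset_iff.mpr hφ
  have hgrading : ∀ k, grading R X k ≤ D (k + 1) := by
    intro k
    induction k with
    | zero =>
      rintro _ ⟨r, rfl⟩
      simp [D]
    | succ k ih =>
      rw [grading, pow_succ']
      refine Submodule.mul_le.mpr fun p hp y hy => ?_
      have hφp : φ p - p ∈ degreeGE (grading R X) 2 := hspan hp
      have hφy : φ y - y ∈ degreeGE (grading R X) (k + 1) := ih hy
      have hy' : y ∈ degreeGE (grading R X) k := le_degreeGE le_rfl hy
      have hφy' : φ y ∈ degreeGE (grading R X) k := by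
        simpa using add_mem (degreeGE_antitone k.le_succ hφy) hy'
      have hp' : p ∈ degreeGE (grading R X) 1 :=
        le_degreeGE le_rfl (mem_grading_one_of_mem_span hp)
      show φ (p * y) - p * y ∈ degreeGE (grading R X) (k + 1 + 1)
      rw [show φ (p * y) - p * y = (φ p - p) * φ y + p * (φ y - y) by rw [map_mul]; noncomm_ring]
      exact add_mem (degreeGE_antitone (by omega) (mul_mem_degreeGE hφp hφy'))
        (degreeGE_antitone (by omega) (mul_mem_degreeGE hp' hφy))
  exact (iSup_le fun k => (hgrading k).trans <|
    Submodule.comap_mono (degreeGE_antitone (Nat.succ_le_succ k.2)) : degreeGE _ a ≤ D (a + 1)) hy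

end FreeAlgebra

section Laurent

variable {K V W : Type*} [Field K] [AddCommGroup V] [Module K V] [AddCommGroup W] [Module K W]

def IsLaurentMap (f : Kˣ → V) : Prop :=
  ∃ c : ℤ →₀ V, ∀ s, f s = c.sum fun k v => ((s ^ k : Kˣ) : K) • v

namespace IsLaurentMap

variable {f : Kˣ → V}

theorem map (hf : IsLaurentMap f) (L : V →ₗ[K] W) : IsLaurentMap fun s => L (f s) := by
  obtain ⟨c, hc⟩ := hf
  refine ⟨c.mapRange L L.map_zero, fun s => ?_⟩
  dsimp only
  rw [hc, map_finsuppSum, Finsupp.sum_mapRange_index (by simp)]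
  simp only [map_smul]

theorem sub_const (hf : IsLaurentMap f) (v : V) : IsLaurentMap fun s => f s - v := by
  obtain ⟨c, hc⟩ := hf
  refine ⟨c - Finsupp.single 0 v, fun s => ?_⟩
  dsimp only
  rw [hc, Finsupp.sum_sub_index (by simp [smul_sub]), Finsupp.sum_single_index (by simp)]
  simp

end IsLaurentMap

theorem Units.exists_zpow_ne_one (K : Type*) [Field K] [Infinite K] {j : ℤ} (hj : j ≠ 0) :
    ∃ s : Kˣ, s ^ j ≠ 1 := by
  classical
  have hpos : 0 < j.natAbs := Int.natAbs_pos.mpr hj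
  obtain ⟨x, hx⟩ :=
    Infinite.exists_notMem_finset (insert 0 (Polynomial.nthRoots j.natAbs (1 : K)).toFinset)
  rw [Finset.mem_insert, Multiset.mem_toFinset, Polynomial.mem_nthRoots hpos, not_or] at hx
  refine ⟨Units.mk0 x hx.1, fun h => hx.2 ?_⟩
  simpa using congrArg Units.val (pow_natAbs_eq_one.mpr h)

theorem linearIndependent_zpow (K : Type*) [Field K] [Infinite K] :
    LinearIndependent K fun (k : ℤ) (s : Kˣ) => ((s ^ k : Kˣ) : K) := by
  refine (linearIndependent_monoidHom Kˣ K).comp (fun k => (Units.coeHom K).comp (zpowGroupHom k))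
    fun k l hkl => ?_
  by_contra hne
  obtain ⟨s, hs⟩ := Units.exists_zpow_ne_one K (sub_ne_zero.mpr hne)
  have : s ^ k = s ^ l := Units.ext (DFunLike.congr_fun hkl s)
  exact hs (by rw [zpow_sub, this, mul_inv_cancel])

variable [Infinite K]

theorem IsLaurentMap.scalar_eq_zero_of_map_mul {g : Kˣ → K} (hg : IsLaurentMap g)
    (hmul : ∀ s t, g (s * t) = g s + g t) : g = 0 := by
  classical
  obtain ⟨c, hc⟩ := hg
  set S : Finset ℤ := insert 0 c.support
  have h0S : (0 : ℤ) ∈ S := Finset.mem_insert_self 0 _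
  have hS : ∀ s, g s = ∑ k ∈ S, c k * ((s ^ k : Kˣ) : K) := fun s => by
    rw [hc, Finsupp.sum_of_support_subset c (Finset.subset_insert 0 c.support) _ (by simp)]
    exact Finset.sum_congr rfl fun k _ => by rw [smul_eq_mul, mul_comm]
  funext s₀
  -- `g (s₀ * s) - g s - g s₀ = 0` is a relation between the characters `s ↦ s ^ k`
  have hrel : ∑ k ∈ S, ((((s₀ ^ k : Kˣ) : K) - 1) * c k - if k = 0 then g s₀ else 0) •
      (fun (s : Kˣ) => ((s ^ k : Kˣ) : K)) = 0 := by
    funext s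
    simp only [Finset.sum_apply, Pi.smul_apply, smul_eq_mul, Pi.zero_apply]
    calc _ = ∑ k ∈ S, (c k * (((s₀ * s) ^ k : Kˣ) : K) - c k * ((s ^ k : Kˣ) : K) -
            if k = 0 then g s₀ else 0) :=
          Finset.sum_congr rfl fun k _ => by
            split_ifs with hk
            · simp [hk]
            · simp only [mul_zpow, Units.val_mul]; ring
      _ = g (s₀ * s) - g s - g s₀ := by
          rw [Finset.sum_sub_distrib, Finset.sum_sub_distrib, Finset.sum_ite_eq', if_pos h0S,
            ← hS, ← hS]
      _ = 0 := by rw [hmul]; ring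
  simpa using linearIndependent_iff'.mp (linearIndependent_zpow K) S _ hrel 0 h0S

theorem IsLaurentMap.eq_zero_of_map_mul {f : Kˣ → V} (hf : IsLaurentMap f)
    (hmul : ∀ s t, f (s * t) = f s + f t) : f = 0 := by
  funext s
  rw [Pi.zero_apply, ← Module.forall_dual_apply_eq_zero_iff K]
  intro φ
  exact congrFun ((hf.map φ).scalar_eq_zero_of_map_mul fun s t => by
    simp only [hmul, map_add]) s

end Laurent

namespace FreeAlgebra

theorem higherDegree_eq_degreeGE (K : Type) [Field K] (n : ℕ) :
    higherDegree K n = degreeGE (grading K (Fin n)) 2 :=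
  rfl

variable {K X : Type*} [Field K] [Infinite K]

theorem eq_one_of_isLaurentMap_of_sub_mem_degreeGE
    (ψ : Kˣ →* (FreeAlgebra K X ≃ₐ[K] FreeAlgebra K X))
    (hψ : ∀ s x, ψ s (ι K x) - ι K x ∈ degreeGE (grading K X) 2)
    (hlaurent : ∀ x, IsLaurentMap fun s => ψ s (ι K x)) : ψ = 1 := by
  have hdeg : ∀ d, 2 ≤ d → ∀ s x, ψ s (ι K x) - ι K x ∈ degreeGE (grading K X) d := by
    intro d hd
    induction d, hd using Nat.le_induction with
    | base => exact hψ
    | succ d _ ih =>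
      intro s x
      have hzero : (fun s => proj (grading K X) d (ψ s (ι K x) - ι K x)) = 0 := by
        refine ((hlaurent x).sub_const (ι K x) |>.map _).eq_zero_of_map_mul fun s t => ?_
        -- the part of degree `d` of `ψ s w` is that of `w` when `w` has no parts of degree `< d`
        have hw : ψ s (ψ t (ι K x) - ι K x) - (ψ t (ι K x) - ι K x) ∈
            degreeGE (grading K X) (d + 1) :=
          sub_mem_degreeGE_succ (ψ s : _ →ₐ[K] _) (hψ s) (ih t x)
        rw [← sub_eq_zero, ← map_add, ← map_sub,
          ← proj_eq_zero_of_mem_degreeGE hw d.lt_succ_self]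
        congr 1
        simp only [map_mul, AlgEquiv.mul_apply, map_sub]
        abel
      exact mem_degreeGE_succ_iff.mpr ⟨ih s x, congrFun hzero s⟩
  ext s : 1
  refine AlgEquiv.coe_toAlgHom_injective (hom_ext (funext fun x => ?_))
  show ψ s (ι K x) = ι K x
  refine sub_eq_zero.mp (eq_zero_of_forall_mem_degreeGE (𝒜 := grading K X) fun a => ?_)
  exact degreeGE_antitone (le_max_left a 2) (hdeg _ (le_max_right a 2) s x)

end FreeAlgebra

theorem Finset.prod_zpow_eq_zpow_sum {G ι : Type*} [CommGroup G] (s : Finset ι) (f : ι → ℤ)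
    (a : G) : ∏ i ∈ s, a ^ f i = a ^ ∑ i ∈ s, f i :=
  Finset.cons_induction (by simp) (fun _ _ _ h => by simp [Finset.prod_cons, zpow_add, h]) s

theorem prod_zpow_zpow_eq_zpow_dotProduct {G ι : Type*} [CommGroup G] [Fintype ι] (a : G)
    (v w : ι → ℤ) : ∏ j, (a ^ v j) ^ w j = a ^ (w ⬝ᵥ v) := by
  simp only [← zpow_mul, Finset.prod_zpow_eq_zpow_sum, dotProduct, mul_comm]

theorem TorusActionIsRegular.isLaurentMap {K : Type} [Field K] {n r : ℕ}
    {σ : (Fin r → Kˣ) →* (FreeAlgebra K (Fin n) ≃ₐ[K] FreeAlgebra K (Fin n))}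
    (hσ : TorusActionIsRegular σ) (v : Fin r → ℤ) (i : Fin n) :
    IsLaurentMap fun s : Kˣ => σ (fun j => s ^ v j) (ι K i) := by
  obtain ⟨a, ha⟩ := hσ i
  refine ⟨a.mapDomain (· ⬝ᵥ v), fun s => ?_⟩
  dsimp only
  rw [ha, Finsupp.sum_mapDomain_index (by simp) (by simp [smul_add])]
  simp only [prod_zpow_zpow_eq_zpow_dotProduct]

theorem power_matrix_nonsingular_general
    {K : Type} [Field K] [IsAlgClosed K] {n : ℕ}
    (σ : (Fin n → Kˣ) →* (FreeAlgebra K (Fin n) ≃ₐ[K] FreeAlgebra K (Fin n)))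
    (hreg : TorusActionIsRegular σ)
    (heff : Function.Injective σ)
    (m : Matrix (Fin n) (Fin n) ℤ)
    (hdiag : ∀ (t : Fin n → Kˣ) (i : Fin n),
      σ t (ι K i) - ((∏ j : Fin n, (t j) ^ (m i j) : Kˣ) : K) • ι K i
        ∈ FreeAlgebra.higherDegree K n) :
    m.det ≠ 0 := by
  intro hdet
  obtain ⟨v, hv, hmv⟩ := Matrix.exists_mulVec_eq_zero_iff.mpr hdet
  let l : Kˣ →* (Fin n → Kˣ) := MonoidHom.pi fun j => zpowGroupHom (v j)
  have hl : σ.comp l = 1 := by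
    refine FreeAlgebra.eq_one_of_isLaurentMap_of_sub_mem_degreeGE _ (fun s i => ?_)
      (hreg.isLaurentMap v)
    have hmi : m i ⬝ᵥ v = 0 := congrFun hmv i
    simpa [l, prod_zpow_zpow_eq_zpow_dotProduct, hmi, FreeAlgebra.higherDegree_eq_degreeGE]
      using hdiag (l s) i
  obtain ⟨j, hj⟩ := Function.ne_iff.mp hv
  obtain ⟨s, hs⟩ := Units.exists_zpow_ne_one K hj
  have hls : l s = 1 := heff (by rw [map_one]; exact DFunLike.congr_fun hl s)
  exact hs (congrFun hls j)

/-- If `σ` is an effective regular action of the `n`-torus on the free algebra on `n` generators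
whose linear part is diagonal, given by the integer power matrix `m`, then `m` is nonsingular. -/
theorem power_matrix_nonsingular
    {K : Type} [Field K] [IsAlgClosed K] {n : ℕ} (hn : 1 ≤ n)
    (σ : (Fin n → Kˣ) →* (FreeAlgebra K (Fin n) ≃ₐ[K] FreeAlgebra K (Fin n)))
    (hreg : TorusActionIsRegular σ)
    (heff : Function.Injective σ)
    (m : Matrix (Fin n) (Fin n) ℤ)
    (hdiag : ∀ (t : Fin n → Kˣ) (i : Fin n),
      σ t (ι K i) - ((∏ j : Fin n, (t j) ^ (m i j) : Kˣ) : K) • ι K i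
        ∈ FreeAlgebra.higherDegree K n) :
    m.det ≠ 0 :=
  power_matrix_nonsingular_general σ hreg heff m hdiag
end

section
/- Let K be an algebraically closed field, n ≥ 1, and let σ be an effective regular action of T_n = (K^×)^n on F_n = FreeAlgebra K (Fin n). Suppose (m_{ij}) ∈ M_n(ℤ) is a nonsingular integer matrix such that for all t and i the element σ(t)(z_i) − (∏_j t_j^{m_{ij}}) • z_i has all homogeneous components in degrees ≥ 2. Let τ be the linear diagonal action defined by τ(t)(z_i) = (∏_j t_j^{m_{ij}}) • z_i. Then there exists a K-algebra automorphism β of F_n such that σ(t) = β ∘ τ(t) ∘ β⁻¹ for every t ∈ (Kˣ)^n. -/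
open FreeAlgebra

/-!
Regularity makes `t ↦ σ t x` a Laurent polynomial with coefficients in the free algebra; as
distinct torus characters are linearly independent, these coefficients are weight vectors, so the
free algebra is the sum of the weight spaces of `σ`. The weight-`m i` coefficient `b i` of
`σ t (z i)` is `z i` modulo degree `≥ 2`, so `β = lift b` is the identity modulo higher degree,
hence injective, and it sends a word `w` to a weight vector whose weight `wordWeight m w` is the
sum of the rows of `m` indexed by the letters of `w`. Modulo higher degree `σ t` acts diagonally
on words, so the lowest-degree words of a weight-`μ` vector have weight `μ`, and subtracting the
`β`-image of its lowest-degree part raises the degree inside the weight space. Since `m` is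
nonsingular the weight of a word determines its length, so this ends after finitely many steps:
every weight vector, hence everything, lies in the range of `β`.
-/

section TorusCharacter

variable {K J : Type*} [Field K] [Fintype J]

def torusChar (μ : J → ℤ) : (J → Kˣ) →* K where
  toFun t := ((∏ j, t j ^ μ j : Kˣ) : K)
  map_one' := by simp
  map_mul' s t := by simp [mul_zpow, Finset.prod_mul_distrib]

theorem torusChar_apply (μ : J → ℤ) (t : J → Kˣ) :
    torusChar μ t = ((∏ j, t j ^ μ j : Kˣ) : K) := rfl

@[simp]
theorem torusChar_zero (t : J → Kˣ) : torusChar (0 : J → ℤ) t = 1 := by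
  simp [torusChar_apply]

theorem torusChar_add (μ ν : J → ℤ) (t : J → Kˣ) :
    torusChar (μ + ν) t = torusChar μ t * torusChar ν t := by
  simp [torusChar_apply, zpow_add, Finset.prod_mul_distrib]

theorem exists_zpow_ne_one [Infinite K] {d : ℤ} (hd : d ≠ 0) : ∃ u : Kˣ, u ^ d ≠ 1 := by
  classical
  have hk : 0 < d.natAbs := Int.natAbs_pos.mpr hd
  obtain ⟨x, hx⟩ :=
    Infinite.exists_notMem_finset (insert 0 (Polynomial.nthRoots d.natAbs (1 : K)).toFinset)
  rw [Finset.mem_insert, Multiset.mem_toFinset, Polynomial.mem_nthRoots hk, not_or] at hx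
  refine ⟨Units.mk0 x hx.1, fun h => hx.2 ?_⟩
  rw [← pow_natAbs_eq_one] at h
  simpa using congrArg Units.val h

theorem torusChar_injective [DecidableEq J] [Infinite K] :
    Function.Injective (torusChar : (J → ℤ) → (J → Kˣ) →* K) := by
  intro μ ν h
  by_contra hne
  obtain ⟨j, hj⟩ := Function.ne_iff.mp hne
  obtain ⟨u, hu⟩ := exists_zpow_ne_one (K := K) (sub_ne_zero.mpr hj)
  have := DFunLike.congr_fun h (Function.update (1 : J → Kˣ) j u)
  simp [torusChar_apply, Function.update_apply] at this
  have huμν : u ^ μ j = u ^ ν j := Units.ext (by simpa using this)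
  exact hu (by rw [zpow_sub, huμν, mul_inv_cancel])

theorem eq_zero_of_forall_sum_torusChar_smul_eq_zero [DecidableEq J] [Infinite K] {V : Type*}
    [AddCommGroup V] [Module K V] {s : Finset (J → ℤ)} {v : (J → ℤ) → V}
    (h : ∀ t : J → Kˣ, ∑ μ ∈ s, torusChar μ t • v μ = 0) :
    ∀ μ ∈ s, v μ = 0 := by
  intro μ hμ
  refine (Module.forall_dual_apply_eq_zero_iff K (v μ)).mp fun φ => ?_
  have hli := (linearIndependent_monoidHom (J → Kˣ) K).comp _ torusChar_injective
  refine linearIndependent_iff'.mp hli s (fun μ => φ (v μ)) (funext fun t => ?_) μ hμ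
  simpa [mul_comm] using congrArg φ (h t)

end TorusCharacter

section Laurent

variable {K J V : Type*} [Field K] [Fintype J] [AddCommGroup V] [Module K V]

def laurentEval (P : (J → ℤ) →₀ V) (t : J → Kˣ) : V :=
  P.sum fun μ c => torusChar μ t • c

theorem laurentEval_sub (P Q : (J → ℤ) →₀ V) (t : J → Kˣ) :
    laurentEval (P - Q) t = laurentEval P t - laurentEval Q t :=
  Finsupp.sum_sub_index fun _ _ _ => smul_sub _ _ _

variable [DecidableEq J] [Infinite K]

theorem laurentEval_injective {P Q : (J → ℤ) →₀ V}
    (h : ∀ t : J → Kˣ, laurentEval P t = laurentEval Q t) : P = Q := by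
  rw [← sub_eq_zero]
  ext μ
  by_contra hμ
  refine hμ (eq_zero_of_forall_sum_torusChar_smul_eq_zero (K := K) (s := (P - Q).support)
    (fun t => ?_) μ (Finsupp.mem_support_iff.mpr hμ))
  show laurentEval (P - Q) t = 0
  rw [laurentEval_sub, h, sub_self]

theorem sub_mem_of_forall_laurentEval_sub_mem (S : Submodule K V) {P : (J → ℤ) →₀ V}
    {ν : J → ℤ} {y : V} (h : ∀ t : J → Kˣ, laurentEval P t - torusChar ν t • y ∈ S) :
    P ν - y ∈ S := by
  have hQ : P.mapRange S.mkQ (map_zero _) = Finsupp.single ν (S.mkQ y) := by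
    refine laurentEval_injective (K := K) fun t => ?_
    have hP : S.mkQ (laurentEval P t) = S.mkQ (torusChar ν t • y) :=
      (Submodule.Quotient.eq S).mpr (h t)
    rw [map_smul] at hP
    rw [laurentEval, laurentEval, Finsupp.sum_mapRange_index (fun _ => smul_zero _),
      Finsupp.sum_single_index (h := fun μ c => torusChar μ t • c) (smul_zero _), ← hP,
      laurentEval, map_finsuppSum]
    simp only [map_smul]
  simpa [Submodule.Quotient.eq] using DFunLike.congr_fun hQ ν

end Laurent

section WeightSpace

variable {K J A : Type*} [Field K] [Fintype J] [Ring A] [Algebra K A]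
  (σ : (J → Kˣ) →* (A ≃ₐ[K] A))

def weightSpace (μ : J → ℤ) : Submodule K A where
  carrier := {x | ∀ t, σ t x = torusChar μ t • x}
  add_mem' hx hy t := by simp [hx t, hy t]
  zero_mem' t := by simp
  smul_mem' c x hx t := by simp [hx t, smul_comm c]

variable {σ}

theorem mem_weightSpace {μ : J → ℤ} {x : A} :
    x ∈ weightSpace σ μ ↔ ∀ t, σ t x = torusChar μ t • x := Iff.rfl

theorem algebraMap_mem_weightSpace_zero (c : K) : algebraMap K A c ∈ weightSpace σ 0 := by
  simp [mem_weightSpace]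

theorem weightSpace_mul_le (μ ν : J → ℤ) :
    weightSpace σ μ * weightSpace σ ν ≤ weightSpace σ (μ + ν) :=
  Submodule.mul_le.mpr fun x hx y hy t => by
    rw [map_mul, hx t, hy t, smul_mul_smul_comm, torusChar_add]

variable [DecidableEq J] [Infinite K]

theorem mem_weightSpace_of_forall_eq_laurentEval {x : A} {P : (J → ℤ) →₀ A}
    (h : ∀ t, σ t x = laurentEval P t) (μ : J → ℤ) : P μ ∈ weightSpace σ μ := by
  by_cases hμ : P μ = 0
  · exact hμ ▸ zero_mem _
  intro u
  refine sub_eq_zero.mp (eq_zero_of_forall_sum_torusChar_smul_eq_zero (K := K)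
    (v := fun μ => σ u (P μ) - torusChar μ u • P μ) (fun t => ?_) μ
    (Finsupp.mem_support_iff.mpr hμ))
  -- compare the expansions in `t` of both sides
  have hut : σ u (σ t x) = σ (u * t) x := by rw [map_mul, AlgEquiv.mul_apply]
  rw [h, h, laurentEval, laurentEval, Finsupp.sum, Finsupp.sum, map_sum] at hut
  simp only [map_smul] at hut
  simp only [smul_sub, smul_smul, Finset.sum_sub_distrib, hut]
  simp only [map_mul, mul_comm, sub_self]

theorem mem_iSup_weightSpace_of_forall_eq_laurentEval {x : A} {P : (J → ℤ) →₀ A}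
    (h : ∀ t, σ t x = laurentEval P t) : x ∈ ⨆ μ, weightSpace σ μ := by
  have hx : x = P.sum fun _ c => c := by simpa [laurentEval] using h 1
  rw [hx]
  exact Submodule.sum_mem _ fun μ _ =>
    Submodule.mem_iSup_of_mem μ (mem_weightSpace_of_forall_eq_laurentEval h μ)

end WeightSpace

section WordWeight

variable {X J : Type*}

def wordWeight (m : Matrix X J ℤ) (w : FreeMonoid X) : J → ℤ :=
  (w.toList.map fun i => m i).sum

@[simp]
theorem wordWeight_one (m : Matrix X J ℤ) : wordWeight m 1 = 0 := rfl

theorem wordWeight_of_mul (m : Matrix X J ℤ) (i : X) (w : FreeMonoid X) :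
    wordWeight m (.of i * w) = m i + wordWeight m w := rfl

theorem lift_torusChar_eq {K : Type*} [Field K] [Fintype J] (m : Matrix X J ℤ) (t : J → Kˣ)
    (w : FreeMonoid X) :
    FreeMonoid.lift (fun i => torusChar (m i) t) w = torusChar (wordWeight m w) t := by
  induction w using FreeMonoid.inductionOn' with
  | one => simp
  | of_mul i w ih => rw [map_mul, FreeMonoid.lift_eval_of, ih, wordWeight_of_mul, torusChar_add]

open scoped Matrix

variable [Fintype X] [DecidableEq X] {m : Matrix X X ℤ}

theorem sum_wordWeight_vecMul_adjugate (m : Matrix X X ℤ) (w : FreeMonoid X) :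
    ∑ j, (wordWeight m w ᵥ* m.adjugate) j = m.det * w.length := by
  induction w using FreeMonoid.inductionOn' with
  | one => rw [wordWeight_one]; simp
  | of_mul i w ih =>
    have hrow : m i ᵥ* m.adjugate = m.det • Pi.single i 1 := by
      rw [show m i = Pi.single i 1 ᵥ* m from (Matrix.single_one_vecMul i m).symm,
        Matrix.vecMul_vecMul, Matrix.mul_adjugate, Matrix.vecMul_smul, Matrix.vecMul_one]
    rw [wordWeight_of_mul, Matrix.add_vecMul, hrow]
    simp [Finset.sum_add_distrib, ih, mul_add, Pi.single_apply]

theorem length_eq_of_wordWeight_eq (hm : m.det ≠ 0) {w w' : FreeMonoid X}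
    (h : wordWeight m w = wordWeight m w') : w.length = w'.length := by
  have := sum_wordWeight_vecMul_adjugate m w
  rw [h, sum_wordWeight_vecMul_adjugate] at this
  exact_mod_cast mul_left_cancel₀ hm this.symm

end WordWeight

namespace FreeAlgebra

section DegreeFiltration

variable {K X : Type*} [CommRing K]

theorem basisFreeMonoid_apply (w : FreeMonoid X) :
    basisFreeMonoid K X w = FreeMonoid.lift (ι K) w := by
  simp only [basisFreeMonoid, equivMonoidAlgebraFreeMonoid, MonoidAlgebra.of_apply,
    LinearEquiv.trans_symm, Module.Basis.map_apply, Finsupp.coe_basisSingleOne,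
    LinearEquiv.trans_apply, MonoidAlgebra.coeffLinearEquiv_symm_apply,
    MonoidAlgebra.ofCoeff_single, AlgEquiv.coe_symm_toLinearEquiv, AlgEquiv.ofAlgHom_symm_apply,
    MonoidAlgebra.lift_single, one_smul]

theorem basisFreeMonoid_mul (w w' : FreeMonoid X) :
    basisFreeMonoid K X (w * w') = basisFreeMonoid K X w * basisFreeMonoid K X w' := by
  simp only [basisFreeMonoid_apply, map_mul]

theorem basisFreeMonoid_of (i : X) : basisFreeMonoid K X (.of i) = ι K i := by
  simp only [basisFreeMonoid_apply, FreeMonoid.lift_eval_of]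

def degreeGE (d : ℕ) : Submodule K (FreeAlgebra K X) :=
  Submodule.span K (basisFreeMonoid K X '' {w | d ≤ w.length})

theorem mem_degreeGE {d : ℕ} {x : FreeAlgebra K X} :
    x ∈ degreeGE d ↔ ∀ w ∈ ((basisFreeMonoid K X).repr x).support, d ≤ w.length :=
  (basisFreeMonoid K X).mem_span_image

theorem degreeGE_zero : degreeGE 0 = (⊤ : Submodule K (FreeAlgebra K X)) :=
  Submodule.eq_top_iff'.mpr fun _ => mem_degreeGE.mpr fun _ _ => Nat.zero_le _

theorem degreeGE_antitone : Antitone (degreeGE : ℕ → Submodule K (FreeAlgebra K X)) :=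
  fun _ _ hde => Submodule.span_mono (Set.image_mono fun _ hw => le_trans hde hw)

theorem basisFreeMonoid_mem_degreeGE (w : FreeMonoid X) :
    basisFreeMonoid K X w ∈ degreeGE w.length :=
  Submodule.subset_span (Set.mem_image_of_mem _ (le_refl w.length))

theorem ι_mem_degreeGE_one (i : X) : ι K i ∈ degreeGE 1 := by
  simpa [basisFreeMonoid_of] using basisFreeMonoid_mem_degreeGE (K := K) (FreeMonoid.of i)

theorem degreeGE_mul_le (a b : ℕ) :
    degreeGE a * degreeGE b ≤ (degreeGE (a + b) : Submodule K (FreeAlgebra K X)) := by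
  rw [degreeGE, degreeGE, Submodule.span_mul_span]
  refine Submodule.span_mono ?_
  rintro _ ⟨_, ⟨w, hw, rfl⟩, _, ⟨w', hw', rfl⟩, rfl⟩
  refine ⟨w * w', ?_, basisFreeMonoid_mul w w'⟩
  simp only [Set.mem_ofPred_eq, FreeMonoid.length_mul] at hw hw' ⊢
  omega

theorem mul_mem_degreeGE {a b : ℕ} {x y : FreeAlgebra K X} (hx : x ∈ degreeGE a)
    (hy : y ∈ degreeGE b) : x * y ∈ degreeGE (a + b) :=
  degreeGE_mul_le a b (Submodule.mul_mem_mul hx hy)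

theorem mem_degreeGE_succ_iff {d : ℕ} {x : FreeAlgebra K X} :
    x ∈ degreeGE (d + 1) ↔
      x ∈ degreeGE d ∧ ∀ w, w.length = d → (basisFreeMonoid K X).repr x w = 0 := by
  simp only [mem_degreeGE, Finsupp.mem_support_iff]
  refine ⟨fun h => ⟨fun w hw => (h w hw).trans' (Nat.le_succ d), fun w hwd => ?_⟩,
    fun ⟨h, h'⟩ w hw => lt_of_le_of_ne (h w hw) fun hwd => hw (h' w hwd.symm)⟩
  by_contra hw
  have := h w hw
  omega

theorem eq_zero_of_forall_mem_degreeGE {x : FreeAlgebra K X} (h : ∀ d, x ∈ degreeGE d) :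
    x = 0 := by
  refine (basisFreeMonoid K X).repr.map_eq_zero_iff.mp (Finsupp.support_eq_empty.mp ?_)
  refine Finset.eq_empty_of_forall_notMem fun w hw => ?_
  have := mem_degreeGE.mp (h (w.length + 1)) w hw
  omega

theorem degreeGE_one_pow_le (k : ℕ) :
    degreeGE 1 ^ k ≤ (degreeGE k : Submodule K (FreeAlgebra K X)) := by
  induction k with
  | zero => simp [degreeGE_zero]
  | succ k ih =>
    rw [pow_succ]
    exact (mul_le_mul' ih le_rfl).trans (degreeGE_mul_le k 1)

theorem higherDegree_le_degreeGE_two {K : Type} [Field K] {n : ℕ} :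
    higherDegree K n ≤ degreeGE 2 := by
  refine iSup_le fun ⟨k, hk⟩ => ?_
  have hspan :
      Submodule.span K (Set.range (ι K : Fin n → FreeAlgebra K (Fin n))) ≤ degreeGE 1 :=
    Submodule.span_le.mpr (Set.range_subset_iff.mpr ι_mem_degreeGE_one)
  exact (pow_le_pow_left' hspan k).trans
    ((degreeGE_one_pow_le k).trans (degreeGE_antitone hk))

theorem mem_degreeGE_of_sub_smul_mem {y : FreeAlgebra K X} {a : K} {w : FreeMonoid X}
    (h : y - a • basisFreeMonoid K X w ∈ degreeGE (w.length + 1)) :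
    y ∈ degreeGE w.length := by
  simpa using add_mem (degreeGE_antitone (Nat.le_succ _) h)
    (Submodule.smul_mem _ a (basisFreeMonoid_mem_degreeGE w))

noncomputable def homogeneousComponent (d : ℕ) (x : FreeAlgebra K X) : FreeAlgebra K X :=
  (basisFreeMonoid K X).repr.symm (((basisFreeMonoid K X).repr x).filter (·.length = d))

theorem repr_homogeneousComponent (d : ℕ) (x : FreeAlgebra K X) :
    (basisFreeMonoid K X).repr (homogeneousComponent d x) =
      ((basisFreeMonoid K X).repr x).filter (·.length = d) :=
  LinearEquiv.apply_symm_apply _ _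

theorem homogeneousComponent_mem_degreeGE (d : ℕ) (x : FreeAlgebra K X) :
    homogeneousComponent d x ∈ degreeGE d :=
  mem_degreeGE.mpr fun w hw => by
    rw [repr_homogeneousComponent, Finsupp.support_filter, Finset.mem_filter] at hw
    exact hw.2.ge

theorem sub_homogeneousComponent_mem_degreeGE_succ {d : ℕ} {x : FreeAlgebra K X}
    (hx : x ∈ degreeGE d) : x - homogeneousComponent d x ∈ degreeGE (d + 1) :=
  mem_degreeGE_succ_iff.mpr ⟨sub_mem hx (homogeneousComponent_mem_degreeGE d x),
    fun w hw => by simp [repr_homogeneousComponent, hw]⟩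

variable {φ : FreeAlgebra K X →ₐ[K] FreeAlgebra K X} {c : X → K}

theorem map_basisFreeMonoid_sub_smul_mem_degreeGE
    (hφ : ∀ i, φ (ι K i) - c i • ι K i ∈ degreeGE 2) (w : FreeMonoid X) :
    φ (basisFreeMonoid K X w) - FreeMonoid.lift c w • basisFreeMonoid K X w ∈
      degreeGE (w.length + 1) := by
  induction w using FreeMonoid.inductionOn' with
  | one => simp [basisFreeMonoid_apply]
  | of_mul i w ih =>
    have hφw := mem_degreeGE_of_sub_smul_mem ih
    have hsplit : φ (basisFreeMonoid K X (.of i * w)) -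
        FreeMonoid.lift c (.of i * w) • basisFreeMonoid K X (.of i * w) =
        (φ (ι K i) - c i • ι K i) * φ (basisFreeMonoid K X w) +
          c i • (ι K i * (φ (basisFreeMonoid K X w) -
            FreeMonoid.lift c w • basisFreeMonoid K X w)) := by
      simp only [basisFreeMonoid_mul, basisFreeMonoid_of, map_mul, FreeMonoid.lift_eval_of,
        mul_sub, sub_mul, smul_sub, smul_mul_assoc, mul_smul_comm, mul_smul]
      abel
    rw [hsplit, FreeMonoid.length_mul, FreeMonoid.length_of]
    refine add_mem ?_ (Submodule.smul_mem _ _ ?_)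
    · exact degreeGE_antitone (by omega) (mul_mem_degreeGE (hφ i) hφw)
    · exact degreeGE_antitone (by omega) (mul_mem_degreeGE (ι_mem_degreeGE_one i) ih)

theorem map_mem_degreeGE (hφ : ∀ i, φ (ι K i) - c i • ι K i ∈ degreeGE 2) {d : ℕ}
    {x : FreeAlgebra K X} (hx : x ∈ degreeGE d) : φ x ∈ degreeGE d := by
  have hle : degreeGE d ≤ (degreeGE d).comap φ.toLinearMap := by
    refine Submodule.span_le.mpr ?_
    rintro _ ⟨w, hw, rfl⟩
    exact degreeGE_antitone hw
      (mem_degreeGE_of_sub_smul_mem (map_basisFreeMonoid_sub_smul_mem_degreeGE hφ w))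
  exact hle hx

theorem repr_map_of_length_eq (hφ : ∀ i, φ (ι K i) - c i • ι K i ∈ degreeGE 2) {d : ℕ}
    {x : FreeAlgebra K X} (hx : x ∈ degreeGE d) {w : FreeMonoid X} (hw : w.length = d) :
    (basisFreeMonoid K X).repr (φ x) w =
      FreeMonoid.lift c w * (basisFreeMonoid K X).repr x w := by
  induction hx using Submodule.span_induction with
  | mem _ hy =>
    obtain ⟨w', hw', rfl⟩ := hy
    have hdiff := (mem_degreeGE_succ_iff.mp (degreeGE_antitone (Nat.succ_le_succ hw')
      (map_basisFreeMonoid_sub_smul_mem_degreeGE hφ w'))).2 w hw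
    rw [map_sub, Finsupp.sub_apply, sub_eq_zero] at hdiff
    rcases eq_or_ne w' w with rfl | hne
    · simp [hdiff]
    · simp [hdiff, hne]
  | zero => simp
  | add x y _ _ hx hy => simp [hx, hy, mul_add]
  | smul a x _ hx => simp [hx, mul_left_comm]

theorem map_sub_mem_degreeGE_succ (hφ : ∀ i, φ (ι K i) - ι K i ∈ degreeGE 2) {d : ℕ}
    {x : FreeAlgebra K X} (hx : x ∈ degreeGE d) : φ x - x ∈ degreeGE (d + 1) := by
  have hφ' : ∀ i, φ (ι K i) - (fun _ => (1 : K)) i • ι K i ∈ degreeGE 2 := by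
    simpa using hφ
  refine mem_degreeGE_succ_iff.mpr ⟨sub_mem (map_mem_degreeGE hφ' hx) hx, fun w hw => ?_⟩
  simp [repr_map_of_length_eq hφ' hx hw, FreeMonoid.lift_apply]

theorem injective_of_forall_sub_mem_degreeGE (hφ : ∀ i, φ (ι K i) - ι K i ∈ degreeGE 2) :
    Function.Injective φ := by
  refine (injective_iff_map_eq_zero φ).mpr fun x hx => eq_zero_of_forall_mem_degreeGE fun d => ?_
  induction d with
  | zero => simp [degreeGE_zero]
  | succ d ih => simpa [hx] using map_sub_mem_degreeGE_succ hφ ih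

end DegreeFiltration

theorem iSup_weightSpace_eq_top {K J X : Type*} [Field K] [Fintype J]
    {σ : (J → Kˣ) →* (FreeAlgebra K X ≃ₐ[K] FreeAlgebra K X)}
    (h : ∀ i, ι K i ∈ ⨆ μ, weightSpace σ μ) : ⨆ μ, weightSpace σ μ = ⊤ := by
  have hmul :
      (⨆ μ, weightSpace σ μ) * (⨆ μ, weightSpace σ μ) ≤ ⨆ μ, weightSpace σ μ := by
    rw [Submodule.iSup_mul]
    refine iSup_le fun μ => ?_
    rw [Submodule.mul_iSup]
    exact iSup_le fun ν => (weightSpace_mul_le μ ν).trans (le_iSup (weightSpace σ) _)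
  refine Submodule.eq_top_iff'.mpr fun x => ?_
  induction x using FreeAlgebra.induction with
  | grade0 c => exact Submodule.mem_iSup_of_mem (0 : J → ℤ) (algebraMap_mem_weightSpace_zero c)
  | grade1 i => exact h i
  | mul x y hx hy => exact hmul (Submodule.mul_mem_mul hx hy)
  | add x y hx hy => exact add_mem hx hy

theorem lift_basisFreeMonoid_mem_weightSpace {K X J : Type*} [Field K] [Fintype J]
    {σ : (J → Kˣ) →* (FreeAlgebra K X ≃ₐ[K] FreeAlgebra K X)} {m : Matrix X J ℤ}
    {b : X → FreeAlgebra K X} (hb : ∀ i, b i ∈ weightSpace σ (m i))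
    (w : FreeMonoid X) : lift K b (basisFreeMonoid K X w) ∈ weightSpace σ (wordWeight m w) := by
  induction w using FreeMonoid.inductionOn' with
  | one => simpa [basisFreeMonoid_apply] using algebraMap_mem_weightSpace_zero (σ := σ) 1
  | of_mul i w ih =>
    rw [basisFreeMonoid_mul, basisFreeMonoid_of, map_mul, lift_ι_apply, wordWeight_of_mul]
    exact weightSpace_mul_le _ _ (Submodule.mul_mem_mul (hb i) ih)

end FreeAlgebra

section LinearizationOfTorusAction

variable {K X : Type*} [Field K] [Fintype X]

def HasDiagonalLinearPart (σ : (X → Kˣ) →* (FreeAlgebra K X ≃ₐ[K] FreeAlgebra K X))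
    (m : Matrix X X ℤ) : Prop :=
  ∀ t i, σ t (ι K i) - torusChar (m i) t • ι K i ∈ degreeGE 2

variable [Infinite K] [DecidableEq X]
  {σ : (X → Kˣ) →* (FreeAlgebra K X ≃ₐ[K] FreeAlgebra K X)} {m : Matrix X X ℤ}

/-- In the lowest degree `σ t` multiplies the coefficient of a word `w` by the character of
`wordWeight m w`. -/
theorem wordWeight_eq_of_mem_weightSpace (hσ : HasDiagonalLinearPart σ m) {μ : X → ℤ}
    {d : ℕ} {v : FreeAlgebra K X} (hv : v ∈ weightSpace σ μ) (hvd : v ∈ degreeGE d)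
    {w : FreeMonoid X} (hw : (basisFreeMonoid K X).repr v w ≠ 0) (hwd : w.length = d) :
    wordWeight m w = μ := by
  refine torusChar_injective (K := K) (MonoidHom.ext fun t => ?_)
  have h := repr_map_of_length_eq (φ := (σ t : FreeAlgebra K X →ₐ[K] FreeAlgebra K X))
    (c := fun i => torusChar (m i) t) (hσ t) hvd hwd
  rw [AlgEquiv.coe_toAlgHom, hv t, map_smul, Finsupp.smul_apply, smul_eq_mul,
    lift_torusChar_eq] at h
  exact mul_right_cancel₀ hw h.symm

theorem weightSpace_inf_degreeGE_le_succ (hσ : HasDiagonalLinearPart σ m) {μ : X → ℤ}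
    {d : ℕ}
    (hμ : ∀ w : FreeMonoid X, w.length = d → wordWeight m w ≠ μ) :
    weightSpace σ μ ⊓ degreeGE d ≤ degreeGE (d + 1) := fun _ ⟨hv, hvd⟩ =>
  mem_degreeGE_succ_iff.mpr ⟨hvd, fun w hwd => by_contra fun hw =>
    hμ w hwd (wordWeight_eq_of_mem_weightSpace hσ hv hvd hw hwd)⟩

theorem exists_weightSpace_inf_degreeGE_eq_bot (hσ : HasDiagonalLinearPart σ m)
    (hm : m.det ≠ 0) (μ : X → ℤ) : ∃ d, weightSpace σ μ ⊓ degreeGE d = ⊥ := by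
  obtain ⟨L, hL⟩ : ∃ L, ∀ w : FreeMonoid X, wordWeight m w = μ → w.length < L := by
    by_cases h : ∃ w, wordWeight m w = μ
    · obtain ⟨w₀, hw₀⟩ := h
      exact ⟨w₀.length + 1, fun w hw =>
        (length_eq_of_wordWeight_eq hm (hw.trans hw₀.symm)).trans_lt (Nat.lt_succ_self _)⟩
    · exact ⟨0, fun w hw => absurd ⟨w, hw⟩ h⟩
  refine ⟨L, eq_bot_iff.mpr fun v ⟨hv, hvL⟩ => ?_⟩
  have hvd : ∀ d ≥ L, v ∈ degreeGE d := by
    refine Nat.le_induction hvL fun d hd ih => ?_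
    exact weightSpace_inf_degreeGE_le_succ hσ
      (fun w hw hwμ => by have := hL w hwμ; omega) ⟨hv, ih⟩
  exact (Submodule.mem_bot K).mpr (eq_zero_of_forall_mem_degreeGE fun d =>
    degreeGE_antitone (le_max_left d L) (hvd _ (le_max_right d L)))

variable {b : X → FreeAlgebra K X}

theorem exists_lift_sub_mem_degreeGE (hσ : HasDiagonalLinearPart σ m)
    (hb : ∀ i, b i ∈ weightSpace σ (m i)) (hb₁ : ∀ i, b i - ι K i ∈ degreeGE 2)
    {μ : X → ℤ} {v : FreeAlgebra K X} (hv : v ∈ weightSpace σ μ) (d : ℕ) :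
    ∃ u, lift K b u ∈ weightSpace σ μ ∧ v - lift K b u ∈ degreeGE d := by
  induction d with
  | zero => exact ⟨0, by simp, by simp [degreeGE_zero]⟩
  | succ d ih =>
    obtain ⟨u, hu, hvu⟩ := ih
    set u' := homogeneousComponent d (v - lift K b u)
    have hu'μ : lift K b u' ∈ weightSpace σ μ := by
      have hspan : u' ∈ Submodule.span K (basisFreeMonoid K X '' {w | wordWeight m w = μ}) := by
        refine (basisFreeMonoid K X).mem_span_image.mpr fun w hw => ?_
        rw [repr_homogeneousComponent, Finsupp.support_filter, Finset.coe_filter] at hw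
        exact wordWeight_eq_of_mem_weightSpace hσ (sub_mem hv hu) hvu
          (Finsupp.mem_support_iff.mp hw.1) hw.2
      have hle : Submodule.span K (basisFreeMonoid K X '' {w | wordWeight m w = μ}) ≤
          (weightSpace σ μ).comap (lift K b).toLinearMap := by
        refine Submodule.span_le.mpr ?_
        rintro _ ⟨w, hw, rfl⟩
        exact hw ▸ lift_basisFreeMonoid_mem_weightSpace hb w
      exact hle hspan
    refine ⟨u + u', by rw [map_add]; exact add_mem hu hu'μ, ?_⟩
    have hsplit : v - lift K b (u + u') = (v - lift K b u - u') - (lift K b u' - u') := by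
      rw [map_add]; abel
    rw [hsplit]
    exact sub_mem (sub_homogeneousComponent_mem_degreeGE_succ hvu)
      (map_sub_mem_degreeGE_succ (by simpa using hb₁) (homogeneousComponent_mem_degreeGE d _))

theorem bijective_lift_of_mem_weightSpace (hσ : HasDiagonalLinearPart σ m) (hm : m.det ≠ 0)
    (htop : ⨆ μ, weightSpace σ μ = ⊤)
    (hb : ∀ i, b i ∈ weightSpace σ (m i)) (hb₁ : ∀ i, b i - ι K i ∈ degreeGE 2) :
    Function.Bijective (lift K b) := by
  refine ⟨injective_of_forall_sub_mem_degreeGE (by simpa using hb₁), fun x => ?_⟩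
  have hrange : ⨆ μ, weightSpace σ μ ≤ LinearMap.range (lift K b).toLinearMap := by
    refine iSup_le fun μ v hv => ?_
    obtain ⟨d, hd⟩ := exists_weightSpace_inf_degreeGE_eq_bot hσ hm μ
    obtain ⟨u, hu, hvu⟩ := exists_lift_sub_mem_degreeGE hσ hb hb₁ hv d
    have h0 : v - lift K b u = 0 := (Submodule.eq_bot_iff _).mp hd _ ⟨sub_mem hv hu, hvu⟩
    exact ⟨u, (sub_eq_zero.mp h0).symm⟩
  exact hrange (htop ▸ Submodule.mem_top)

end LinearizationOfTorusAction

theorem torus_action_conjugate_to_diagonal_general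
    {K : Type} [Field K] [IsAlgClosed K] {n : ℕ}
    (σ : (Fin n → Kˣ) →* (FreeAlgebra K (Fin n) ≃ₐ[K] FreeAlgebra K (Fin n)))
    (hreg : TorusActionIsRegular σ)
    (m : Matrix (Fin n) (Fin n) ℤ)
    (hm : m.det ≠ 0)
    (hdiag : ∀ (t : Fin n → Kˣ) (i : Fin n),
      σ t (ι K i) - ((∏ j : Fin n, (t j) ^ (m i j) : Kˣ) : K) • ι K i
        ∈ FreeAlgebra.higherDegree K n) :
    ∃ β : FreeAlgebra K (Fin n) ≃ₐ[K] FreeAlgebra K (Fin n),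
      ∀ (t : Fin n → Kˣ) (i : Fin n),
        σ t (β (ι K i)) = ((∏ j : Fin n, (t j) ^ (m i j) : Kˣ) : K) • β (ι K i) := by
  have hσ : HasDiagonalLinearPart σ m := fun t i => higherDegree_le_degreeGE_two (hdiag t i)
  choose P hP using hreg
  have hP' : ∀ i t, σ t (ι K i) = laurentEval (P i) t := hP
  have hb : ∀ i, P i (m i) ∈ weightSpace σ (m i) :=
    fun i => mem_weightSpace_of_forall_eq_laurentEval (hP' i) (m i)
  have hb₁ : ∀ i, P i (m i) - ι K i ∈ degreeGE 2 :=
    fun i => sub_mem_of_forall_laurentEval_sub_mem _ fun t => hP' i t ▸ hσ t i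
  have htop : ⨆ μ, weightSpace σ μ = ⊤ :=
    iSup_weightSpace_eq_top fun i => mem_iSup_weightSpace_of_forall_eq_laurentEval (hP' i)
  refine ⟨AlgEquiv.ofBijective _ (bijective_lift_of_mem_weightSpace hσ hm htop hb hb₁),
    fun t i => ?_⟩
  rw [AlgEquiv.ofBijective_apply, lift_ι_apply]
  exact hb i t

/-- If `σ` is an effective regular action of the `n`-torus on the free algebra with diagonal
monomial linear part given by the nonsingular integer matrix `m`, then `σ` is conjugate, by an
algebra automorphism `β`, to the linear diagonal action `τ(t)(z_i) = (∏ j, t_j ^ m i j) • z_i`;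
equivalently `σ(t) ∘ β = β ∘ τ(t)` for all `t`. -/
theorem torus_action_conjugate_to_diagonal
    {K : Type} [Field K] [IsAlgClosed K] {n : ℕ} (hn : 1 ≤ n)
    (σ : (Fin n → Kˣ) →* (FreeAlgebra K (Fin n) ≃ₐ[K] FreeAlgebra K (Fin n)))
    (hreg : TorusActionIsRegular σ)
    (heff : Function.Injective σ)
    (m : Matrix (Fin n) (Fin n) ℤ)
    (hm : m.det ≠ 0)
    (hdiag : ∀ (t : Fin n → Kˣ) (i : Fin n),
      σ t (ι K i) - ((∏ j : Fin n, (t j) ^ (m i j) : Kˣ) : K) • ι K i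
        ∈ FreeAlgebra.higherDegree K n) :
    ∃ β : FreeAlgebra K (Fin n) ≃ₐ[K] FreeAlgebra K (Fin n),
      ∀ (t : Fin n → Kˣ) (i : Fin n),
        σ t (β (ι K i)) = ((∏ j : Fin n, (t j) ^ (m i j) : Kˣ) : K) • β (ι K i) :=
  torus_action_conjugate_to_diagonal_general σ hreg m hm hdiag
end

section
/- Let K be a field and let φ be a K-algebra automorphism of F_2 = FreeAlgebra K (Fin 2) of the form φ(z_1) = z_1 + f and φ(z_2) = z_2 for some f ∈ F_2. If f ≠ 0, then f does not lie in the commutator ideal, i.e., ε(f) ≠ 0. -/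
open FreeAlgebra

/-- The abelianization homomorphism from the free associative algebra to the commutative
polynomial algebra, sending each generator to the corresponding variable.  Its kernel is the
commutator ideal. -/
noncomputable def abelianization (K : Type) [Field K] (n : ℕ) :
    FreeAlgebra K (Fin n) →ₐ[K] MvPolynomial (Fin n) K :=
  FreeAlgebra.lift K fun i => (MvPolynomial.X i : MvPolynomial (Fin n) K)

/-!
Identify `FreeAlgebra K (Fin 2)` with the monoid algebra of the free monoid on `z₁ = of 0`,
`z₂ = of 1`, and order words degree-lexicographically.  If `ε f = 0`, the leading word `w` of `f`
is not a power of a single letter, since such a word is the only one in its commutative class.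
So `z₁` occurs in `w` and `w` is longer than `z₁`; hence `w` is the leading word of `φ z₁ = z₁ + f`
while `z₂` is that of `φ z₂`, and `φ` sends each word `u` to an element with leading word
`u[z₁ := w]`.  As `z₁` occurs in `w`, this substitution is injective, so the leading word of `φ q`
is `u[z₁ := w]` for some word `u` of `q` whenever `q ≠ 0`.  Such a word is never `z₁`, so `z₁` is
not in the image of `φ`.
-/

theorem UniqueMul.of_isGreatest {M : Type*} [Mul M] [LinearOrder M] [MulLeftStrictMono M]
    [MulRightStrictMono M] {s t : Finset M} {a b : M}
    (ha : IsGreatest (s : Set M) a) (hb : IsGreatest (t : Set M) b) : UniqueMul s t a b := by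
  have := mulLeftMono_of_mulLeftStrictMono M
  intro x y hx hy hxy
  obtain hxa | rfl := (ha.2 hx).lt_or_eq
  · exact absurd hxy (mul_lt_mul_of_lt_of_le hxa (hb.2 hy)).ne
  obtain hyb | rfl := (hb.2 hy).lt_or_eq
  · exact absurd hxy (mul_lt_mul_right hyb x).ne
  exact ⟨rfl, rfl⟩

namespace MonoidAlgebra

section Preorder

variable {R M : Type*} [Semiring R] [Preorder M]

theorem isGreatest_support_single (a : M) {r : R} (hr : r ≠ 0) :
    IsGreatest ((single a r).coeff.support : Set M) a := by
  rw [coeff_single, Finsupp.support_single _ hr, Finset.coe_singleton]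
  exact isGreatest_singleton

theorem isGreatest_support_add_of_lt {p q : R[M]} {a : M}
    (hp : IsGreatest (p.coeff.support : Set M) a) (hq : ∀ b ∈ q.coeff.support, b < a) :
    IsGreatest ((p + q).coeff.support : Set M) a := by
  classical
  refine ⟨?_, fun x hx => ?_⟩
  · rw [Finset.mem_coe, Finsupp.mem_support_iff, coeff_add, Finsupp.add_apply,
      Finsupp.notMem_support_iff.mp fun h => (hq a h).false, add_zero]
    exact Finsupp.mem_support_iff.mp hp.1
  · rw [coeff_add] at hx
    exact (Finset.mem_union.mp (Finsupp.support_add hx)).elim (fun h => hp.2 h)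
      fun h => (hq x h).le

end Preorder

section LinearOrder

variable {R M : Type*} [Semiring R] [LinearOrder M]

theorem exists_isGreatest_support_sum [NoZeroDivisors R] {ι : Type*} {s : Finset ι}
    (hs : s.Nonempty) {c : ι → R} (hc : ∀ i ∈ s, c i ≠ 0) {p : ι → R[M]} {u : ι → M}
    (hu : Set.InjOn u s) (hp : ∀ i ∈ s, IsGreatest ((p i).coeff.support : Set M) (u i)) :
    ∃ i ∈ s, IsGreatest ((∑ j ∈ s, c j • p j).coeff.support : Set M) (u i) := by
  classical
  obtain ⟨i, hi, hmax⟩ := s.exists_max_image u hs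
  refine ⟨i, hi, ?_, fun x hx => ?_⟩
  · have hother : ∀ j ∈ s, j ≠ i → (c j • p j).coeff (u i) = 0 := by
      intro j hj hji
      have hlt : u j < u i := (hmax j hj).lt_of_ne fun h => hji (hu hj hi h)
      rw [coeff_smul_apply, Finsupp.notMem_support_iff.mp fun h => (hp j hj).2 h |>.not_gt hlt,
        smul_zero]
    rw [Finset.mem_coe, Finsupp.mem_support_iff, coeff_sum, Finset.sum_apply',
      Finset.sum_eq_single_of_mem i hi hother, coeff_smul_apply, smul_eq_mul]
    exact mul_ne_zero (hc i hi) (Finsupp.mem_support_iff.mp (hp i hi).1)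
  · rw [coeff_sum] at hx
    obtain ⟨j, hj, hxj⟩ := Finset.mem_biUnion.mp (Finsupp.support_finsetSum hx)
    exact ((hp j hj).2 (Finsupp.support_smul hxj)).trans (hmax j hj)

theorem isGreatest_support_mul [NoZeroDivisors R] [Monoid M] [MulLeftStrictMono M]
    [MulRightStrictMono M] {p q : R[M]} {a b : M}
    (hp : IsGreatest (p.coeff.support : Set M) a) (hq : IsGreatest (q.coeff.support : Set M) b) :
    IsGreatest ((p * q).coeff.support : Set M) (a * b) := by
  classical
  have := mulLeftMono_of_mulLeftStrictMono M
  have := mulRightMono_of_mulRightStrictMono M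
  refine ⟨?_, fun x hx => ?_⟩
  · rw [Finset.mem_coe, Finsupp.mem_support_iff,
      coeff_mul_mul_of_uniqueMul (UniqueMul.of_isGreatest hp hq)]
    exact mul_ne_zero (Finsupp.mem_support_iff.mp hp.1) (Finsupp.mem_support_iff.mp hq.1)
  · obtain ⟨y, hy, z, hz, rfl⟩ := Finset.mem_mul.mp (support_coeff_mul_subset p q hx)
    exact mul_le_mul' (hp.2 hy) (hq.2 hz)

end LinearOrder

section FreeMonoid

variable {R M α : Type*} [CommSemiring R] [NoZeroDivisors R] [Nontrivial R] [Monoid M]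
  [LinearOrder M] [MulLeftStrictMono M] [MulRightStrictMono M]
  (f : R[FreeMonoid α] →ₐ[R] R[M]) {σ : α → M}

theorem isGreatest_support_map_single
    (hσ : ∀ x, IsGreatest ((f (single (FreeMonoid.of x) 1)).coeff.support : Set M) (σ x))
    (m : FreeMonoid α) :
    IsGreatest ((f (single m 1)).coeff.support : Set M) (FreeMonoid.lift σ m) := by
  induction m using FreeMonoid.inductionOn with
  | one =>
    rw [← one_def, map_one, one_def]
    exact isGreatest_support_single 1 one_ne_zero
  | of x => exact hσ x
  | mul m n hm hn =>
    rw [← mul_one (1 : R), ← single_mul_single, map_mul, map_mul]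
    exact isGreatest_support_mul hm hn

theorem exists_isGreatest_support_map
    (hσ : ∀ x, IsGreatest ((f (single (FreeMonoid.of x) 1)).coeff.support : Set M) (σ x))
    (hinj : Function.Injective (FreeMonoid.lift σ)) {q : R[FreeMonoid α]} (hq : q ≠ 0) :
    ∃ m ∈ q.coeff.support, IsGreatest ((f q).coeff.support : Set M) (FreeMonoid.lift σ m) := by
  have hfq : f q = ∑ m ∈ q.coeff.support, q.coeff m • f (single m 1) := by
    conv_lhs => rw [← sum_coeff_single q]
    simp only [Finsupp.sum, map_sum, ← map_smul, smul_single', mul_one]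
  rw [hfq]
  exact exists_isGreatest_support_sum (Finsupp.support_nonempty_iff.mpr (by simpa using hq))
    (fun m hm => Finsupp.mem_support_iff.mp hm) hinj.injOn
    (fun m _ => isGreatest_support_map_single f hσ m)

end FreeMonoid

end MonoidAlgebra

theorem List.append_right_lt_of_length_eq {α : Type*} [LT α] {l₁ l₂ : List α}
    (hlen : l₁.length = l₂.length) (h : l₁ < l₂) (l₃ : List α) : l₁ ++ l₃ < l₂ ++ l₃ := by
  induction h with
  | nil => simp at hlen
  | rel hab => exact List.Lex.rel hab
  | cons _ ih => exact List.Lex.cons (ih (by simpa using hlen))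

namespace FreeMonoid

section DegLex

variable {α : Type*}

def degLexKey (m : FreeMonoid α) : ℕ ×ₗ List α := toLex (m.length, m.toList)

theorem degLexKey_injective : Function.Injective (degLexKey (α := α)) :=
  fun _ _ h => toList.injective (congrArg (fun k => (ofLex k).2) h)

variable [LinearOrder α]

abbrev degLexOrder : LinearOrder (FreeMonoid α) := LinearOrder.lift' degLexKey degLexKey_injective

attribute [local instance] degLexOrder

theorem degLex_lt_iff {a b : FreeMonoid α} :
    a < b ↔ a.length < b.length ∨ a.length = b.length ∧ a.toList < b.toList :=
  Prod.Lex.toLex_lt_toLex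

theorem degLex_mulLeftStrictMono : MulLeftStrictMono (FreeMonoid α) where
  elim a b c h := by
    dsimp only at h ⊢
    rw [degLex_lt_iff] at h ⊢
    simp only [length_mul, toList_mul, add_lt_add_iff_left, add_right_inj]
    exact h.imp_right fun h => ⟨h.1, List.append_left_lt h.2⟩

theorem degLex_mulRightStrictMono : MulRightStrictMono (FreeMonoid α) where
  elim a b c h := by
    dsimp only [Function.swap] at h ⊢
    rw [degLex_lt_iff] at h ⊢
    simp only [length_mul, toList_mul, add_lt_add_iff_right, add_left_inj]
    exact h.imp_right fun h => ⟨h.1, List.append_right_lt_of_length_eq h.1 h.2 _⟩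

end DegLex

variable {α : Type*}

theorem of_mul_inj {a b : α} {x y : FreeMonoid α} (h : of a * x = of b * y) : a = b ∧ x = y := by
  have h' := List.cons.inj (congrArg toList h)
  exact ⟨h'.1, toList.injective h'.2⟩

theorem eq_of_mem_pow_of {a b : α} {k : ℕ} (h : a ∈ of b ^ k) : a = b := by
  induction k with
  | zero => exact absurd h notMem_one
  | succ k ih => exact (mem_mul.mp (pow_succ (of b) k ▸ h)).elim ih mem_of.mp

theorem one_lt_length_of_mem {a : α} {w : FreeMonoid α} (ha : a ∈ w) (hw : w ≠ of a) :
    1 < w.length := by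
  have h0 : w.length ≠ 0 := fun h => notMem_one (length_eq_zero.mp h ▸ ha)
  have h1 : w.length ≠ 1 := fun h => by
    obtain ⟨b, rfl⟩ := length_eq_one.mp h
    exact hw (by rw [mem_of.mp ha])
  omega

theorem exists_eq_pow_mul_of_zero_mem {w : FreeMonoid (Fin 2)} (hw : (0 : Fin 2) ∈ w) :
    ∃ k u, w = of 1 ^ k * (of 0 * u) := by
  induction w using FreeMonoid.inductionOn' with
  | one => exact absurd hw notMem_one
  | of_mul x w ih =>
    match x with
    | 0 => exact ⟨0, w, by rw [pow_zero, one_mul]⟩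
    | 1 =>
      obtain ⟨k, u, rfl⟩ := ih ((mem_mul.mp hw).resolve_left fun h => by cases mem_of.mp h)
      exact ⟨k + 1, u, by rw [pow_succ', mul_assoc]⟩

variable {w u : FreeMonoid (Fin 2)} {k : ℕ}

/-- The left side begins with more than `k` letters `of 1` before any `of 0`, the right side
with exactly `k`. -/
theorem pow_succ_mul_lift_ne (hw : w = of 1 ^ k * (of 0 * u)) (r x : FreeMonoid (Fin 2))
    (i : ℕ) : of 1 ^ (i + 1) * lift ![w, of 1] r ≠ of 1 ^ k * (of 0 * x) := by
  induction r using FreeMonoid.inductionOn' generalizing i with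
  | one =>
    intro h
    rw [map_one, mul_one] at h
    have : (0 : Fin 2) ∈ of (1 : Fin 2) ^ (i + 1) :=
      h ▸ mem_mul.mpr (.inr (mem_mul.mpr (.inl mem_of_self)))
    exact absurd (eq_of_mem_pow_of this) (by decide)
  | of_mul c r ih =>
    intro h
    rw [map_mul, lift_eval_of] at h
    match c with
    | 0 =>
      rw [Matrix.cons_val_zero, hw, mul_assoc, ← mul_assoc, pow_mul_comm, mul_assoc, pow_succ',
        mul_assoc, mul_assoc] at h
      exact absurd (of_mul_inj (mul_left_cancel h)).1 (by decide)
    | 1 =>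
      rw [Matrix.cons_val_one, Matrix.cons_val_fin_one, ← mul_assoc, ← pow_succ] at h
      exact ih (i + 1) h

theorem lift_injective_of_zero_mem (hw : (0 : Fin 2) ∈ w) :
    Function.Injective (lift ![w, of 1]) := by
  obtain ⟨k, u, hku⟩ := exists_eq_pow_mul_of_zero_mem hw
  have hne_one : ∀ c, ![w, of 1] c ≠ 1
    | 0 => fun (h : w = 1) => notMem_one (h ▸ hw)
    | 1 => of_ne_one 1
  have hcross : ∀ r r', lift ![w, of 1] (of 0 * r) ≠ lift ![w, of 1] (of 1 * r') := by
    intro r r' h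
    refine pow_succ_mul_lift_ne hku r' (u * lift ![w, of 1] r) 0 ?_
    simpa [hku, mul_assoc] using h.symm
  intro m m' h
  induction m using FreeMonoid.inductionOn' generalizing m' with
  | one =>
    cases m' with
    | one => rfl
    | of_mul c r =>
      rw [map_one, map_mul, lift_eval_of] at h
      exact absurd (eq_one_of_mul_right' h.symm) (hne_one c)
  | of_mul c r ih =>
    cases m' with
    | one =>
      rw [map_one, map_mul, lift_eval_of] at h
      exact absurd (eq_one_of_mul_right' h) (hne_one c)
    | of_mul d r' =>
      match c, d with
      | 0, 1 => exact absurd h (hcross r r')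
      | 1, 0 => exact absurd h.symm (hcross r' r)
      | 0, 0 | 1, 1 =>
        rw [map_mul, map_mul] at h
        rw [ih (mul_left_cancel h)]

theorem lift_ne_of_zero (hw : 1 < w.length) (m : FreeMonoid (Fin 2)) :
    lift ![w, of 1] m ≠ of 0 := by
  cases m with
  | one => exact (of_ne_one 0).symm
  | of_mul c r =>
    intro h
    rw [map_mul, lift_eval_of] at h
    match c with
    | 0 =>
      have := congrArg length h
      rw [length_mul, length_of, Matrix.cons_val_zero] at this
      omega
    | 1 => exact absurd (of_mul_inj (h.trans (mul_one (of 0)).symm)).1 (by decide)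

end FreeMonoid

attribute [local instance] FreeMonoid.degLexOrder FreeMonoid.degLex_mulLeftStrictMono
  FreeMonoid.degLex_mulRightStrictMono

theorem MonoidAlgebra.isGreatest_support_single_add {R α : Type*} [Semiring R] [LinearOrder α]
    {F : MonoidAlgebra R (FreeMonoid α)} {w : FreeMonoid α}
    (hw : IsGreatest (F.coeff.support : Set (FreeMonoid α)) w) (hlen : 1 < w.length) (a : α)
    (r : R) :
    IsGreatest ((single (FreeMonoid.of a) r + F).coeff.support : Set (FreeMonoid α)) w := by
  rw [add_comm]
  refine isGreatest_support_add_of_lt hw fun b hb => ?_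
  rw [Finset.mem_singleton.mp (Finsupp.support_single_subset hb)]
  exact FreeMonoid.degLex_lt_iff.mpr (.inl hlen)

theorem FreeAlgebra.equivMonoidAlgebraFreeMonoid_ι {R X : Type*} [CommSemiring R] (x : X) :
    equivMonoidAlgebraFreeMonoid (ι R x) = MonoidAlgebra.single (FreeMonoid.of x) 1 := by
  simp [equivMonoidAlgebraFreeMonoid]

section Abelianization

variable {K : Type} [Field K] {n : ℕ}

theorem abelianization_equivMonoidAlgebraFreeMonoid_symm_single (m : FreeMonoid (Fin n))
    (c : K) : abelianization K n (equivMonoidAlgebraFreeMonoid.symm (MonoidAlgebra.single m c)) =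
      MvPolynomial.monomial (Multiset.toFinsupp (m.toList : Multiset (Fin n))) c := by
  rw [← mul_one c, ← MonoidAlgebra.smul_single', map_smul, map_smul, ← smul_eq_mul,
    ← MvPolynomial.smul_monomial]
  congr 1
  induction m using FreeMonoid.inductionOn with
  | one => simp [← MonoidAlgebra.one_def]
  | of x => simp [equivMonoidAlgebraFreeMonoid, abelianization, MvPolynomial.X]
  | mul a b ha hb =>
    rw [← mul_one (1 : K), ← MonoidAlgebra.single_mul_single, map_mul, map_mul, ha, hb,
      MvPolynomial.monomial_mul, FreeMonoid.toList_mul, ← Multiset.coe_add, map_add]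

theorem abelianization_ne_zero_of_mem_support {f : FreeAlgebra K (Fin n)} {w : FreeMonoid (Fin n)}
    (hw : w ∈ (equivMonoidAlgebraFreeMonoid f).coeff.support) {a : Fin n} {k : ℕ}
    (hwa : w.toList = List.replicate k a) : abelianization K n f ≠ 0 := by
  classical
  intro h
  have hcoeff := congrArg (MvPolynomial.coeff (Multiset.toFinsupp (w.toList : Multiset (Fin n)))) h
  rw [← equivMonoidAlgebraFreeMonoid.symm_apply_apply f,
    ← MonoidAlgebra.sum_coeff_single (equivMonoidAlgebraFreeMonoid f), Finsupp.sum, map_sum,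
    map_sum, MvPolynomial.coeff_zero, MvPolynomial.coeff_sum] at hcoeff
  simp_rw [abelianization_equivMonoidAlgebraFreeMonoid_symm_single,
    MvPolynomial.coeff_monomial] at hcoeff
  rw [Finset.sum_eq_single_of_mem w hw, if_pos rfl] at hcoeff
  · exact Finsupp.mem_support_iff.mp hw hcoeff
  · intro m _ hmw
    rw [if_neg]
    intro hm
    have hperm : m.toList.Perm w.toList := Multiset.coe_eq_coe.mp (Multiset.toFinsupp.injective hm)
    rw [hwa, List.perm_replicate] at hperm
    exact hmw (FreeMonoid.toList.injective (hperm.trans hwa.symm))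

end Abelianization

/-- If `φ` is an automorphism of the free algebra on two generators of the form
`z₁ ↦ z₁ + f`, `z₂ ↦ z₂` with `f ≠ 0`, then `f` does not lie in the commutator ideal. -/
theorem triangular_automorphism_not_commutator
    {K : Type} [Field K]
    (φ : FreeAlgebra K (Fin 2) ≃ₐ[K] FreeAlgebra K (Fin 2))
    (f : FreeAlgebra K (Fin 2))
    (hφ1 : φ (ι K 0) = ι K 0 + f)
    (hφ2 : φ (ι K 1) = ι K 1)
    (hf : f ≠ 0) :
    abelianization K 2 f ≠ 0 := by
  intro habel
  set e := equivMonoidAlgebraFreeMonoid (R := K) (X := Fin 2)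
  set Φ := (e.symm.trans φ).trans e
  obtain ⟨w, hw⟩ : ∃ w, IsGreatest ((e f).coeff.support : Set (FreeMonoid (Fin 2))) w :=
    ⟨_, Finset.isGreatest_max' _ (by simpa [e] using hf)⟩
  have hw0 : (0 : Fin 2) ∈ w := by
    by_contra h
    refine abelianization_ne_zero_of_mem_support hw.1 (a := 1) (k := w.length) ?_ habel
    exact List.eq_replicate_iff.mpr ⟨rfl, fun b hb => by fin_cases b; exacts [absurd hb h, rfl]⟩
  have hlen : 1 < w.length := FreeMonoid.one_lt_length_of_mem hw0 fun h =>
    abelianization_ne_zero_of_mem_support hw.1 (k := 1) (a := 0) (by rw [h]; rfl) habel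
  have hlead : ∀ i, IsGreatest ((Φ (.single (.of i) 1)).coeff.support : Set (FreeMonoid (Fin 2)))
      (![w, .of 1] i)
    | 0 => by
      simpa [Φ, e, ← equivMonoidAlgebraFreeMonoid_ι, hφ1] using
        MonoidAlgebra.isGreatest_support_single_add hw hlen 0 (1 : K)
    | 1 => by
      simpa [Φ, e, ← equivMonoidAlgebraFreeMonoid_ι, hφ2] using
        MonoidAlgebra.isGreatest_support_single (FreeMonoid.of (1 : Fin 2)) (one_ne_zero (α := K))
  obtain ⟨m, -, hm⟩ := MonoidAlgebra.exists_isGreatest_support_map Φ.toAlgHom hlead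
    (FreeMonoid.lift_injective_of_zero_mem hw0)
    (q := Φ.symm (.single (.of 0) 1)) (by simp)
  rw [AlgEquiv.toAlgHom_apply, AlgEquiv.apply_symm_apply] at hm
  exact FreeMonoid.lift_ne_of_zero hlen m
    (hm.unique (MonoidAlgebra.isGreatest_support_single _ one_ne_zero))
end

section
/- Let K be a field, n, N ≥ 1, and let φ be a K-algebra endomorphism of F_n = FreeAlgebra K (Fin n) that admits a test algebra: there is a K-subalgebra P of the matrix algebra M_N(K) = Matrix (Fin N) (Fin N) K and a tuple p : Fin n → M_N(K) with p_i ∉ P for some i, such that ev_p(φ(z_j)) ∈ P for every j, where ev_p : F_n →ₐ[K] M_N(K) is the K-algebra homomorphism determined by z_j ↦ p_j. Then φ is not an automorphism of F_n (φ is not bijective). -/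
open FreeAlgebra

namespace FreeAlgebra

variable {R X Y A : Type*} [CommSemiring R] [Semiring A] [Algebra R A]

theorem range_le_iff_forall_ι_mem {g : FreeAlgebra R X →ₐ[R] A} {P : Subalgebra R A} :
    g.range ≤ P ↔ ∀ x, g (ι R x) ∈ P := by
  rw [← Algebra.map_top, ← adjoin_range_ι, AlgHom.map_adjoin, Algebra.adjoin_le_iff,
    ← Set.range_comp, Set.range_subset_iff]
  rfl

theorem ι_mem_of_surjective {φ : FreeAlgebra R Y →ₐ[R] FreeAlgebra R X}
    (hφ : Function.Surjective φ) {f : FreeAlgebra R X →ₐ[R] A} {P : Subalgebra R A}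
    (hP : ∀ y, f (φ (ι R y)) ∈ P) (x : X) : f (ι R x) ∈ P := by
  obtain ⟨a, ha⟩ := hφ (ι R x)
  rw [← ha]
  exact (range_le_iff_forall_ι_mem (g := f.comp φ)).2 hP ⟨a, rfl⟩

end FreeAlgebra

theorem test_algebra_implies_not_automorphism_general
    {K : Type} [Field K] {n N : ℕ}
    (φ : FreeAlgebra K (Fin n) →ₐ[K] FreeAlgebra K (Fin n))
    (P : Subalgebra K (Matrix (Fin N) (Fin N) K))
    (p : Fin n → Matrix (Fin N) (Fin N) K)
    (hp : ∃ i : Fin n, p i ∉ P)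
    (htest : ∀ j : Fin n, FreeAlgebra.lift K p (φ (ι K j)) ∈ P) :
    ¬ Function.Bijective φ := by
  intro hφ
  obtain ⟨i, hi⟩ := hp
  exact hi (by simpa using ι_mem_of_surjective hφ.2 htest i)

/-- If an endomorphism `φ` of the free algebra admits a *test algebra* — a subalgebra `P` of a
matrix algebra `M_N(K)` together with a point `p ∈ M_N(K)^n` not all of whose coordinates lie
in `P`, yet the induced polynomial map sends `p` into `P^n` — then `φ` is not an automorphism. -/
theorem test_algebra_implies_not_automorphism
    {K : Type} [Field K] {n N : ℕ} (hn : 1 ≤ n) (hN : 1 ≤ N)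
    (φ : FreeAlgebra K (Fin n) →ₐ[K] FreeAlgebra K (Fin n))
    (P : Subalgebra K (Matrix (Fin N) (Fin N) K))
    (p : Fin n → Matrix (Fin N) (Fin N) K)
    (hp : ∃ i : Fin n, p i ∉ P)
    (htest : ∀ j : Fin n, FreeAlgebra.lift K p (φ (ι K j)) ∈ P) :
    ¬ Function.Bijective φ :=
  test_algebra_implies_not_automorphism_general φ P p hp htest
end

section
/- Let K be a field, n, m ≥ 1, A = FreeAlgebra K (Fin n ⊕ Fin m) with generators x_i = ι(inl i) (i = 1,…,n) and y_j = ι(inr j) (j = 1,…,m), and let C be an associative unital K-algebra. Let α, γ : A →ₐ[K] C be surjective K-algebra homomorphisms with α(y_j) = 0 for all j and γ(x_i) = 0 for all i. Then there exist elements g_1,…,g_n in the K-subalgebra of A generated by y_1,…,y_m and f_1,…,f_m in the K-subalgebra of A generated by x_1,…,x_n such that α(x_i) = γ(g_i) and α(f_j) = γ(y_j) for all i, j, and there exists a K-algebra automorphism τ of A with τ(x_i) = x_i + g_i for all i and α = γ ∘ τ. In particular α is equivalent to γ. -/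
/-!
Because `γ` kills the `x_i`, every value of `γ` is already taken on `K⟨y⟩`; this gives the `g_i`,
and symmetrically `α` gives the `f_j`. Take `τ = σ₁ ∘ σ₂⁻¹` with the triangular automorphisms
`σ₁ : x ↦ x + g` and `σ₂ : y ↦ y + f`. Then `γ ∘ σ₁` agrees with `α` on the `x_i`, hence on
`K⟨x⟩ ∋ f_j`, so `γ (τ y_j) = γ y_j - γ (σ₁ f_j) = γ y_j - α f_j = 0 = α y_j`, while
`γ (τ x_i) = γ (x_i + g_i) = α x_i`.
-/

open FreeAlgebra

namespace FreeAlgebra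

variable {R σ C : Type*} [CommRing R] [Ring C] [Algebra R C]

theorem exists_mem_adjoin_image_apply_eq (φ : FreeAlgebra R σ →ₐ[R] C) {S : Set σ}
    (hφ : ∀ v ∉ S, φ (ι R v) = 0) (a : FreeAlgebra R σ) :
    ∃ b ∈ Algebra.adjoin R (ι R '' S), φ b = φ a := by
  induction a using FreeAlgebra.induction with
  | grade0 r => exact ⟨algebraMap R _ r, Subalgebra.algebraMap_mem _ r, rfl⟩
  | grade1 v =>
    by_cases hv : v ∈ S
    · exact ⟨ι R v, Algebra.subset_adjoin ⟨v, hv, rfl⟩, rfl⟩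
    · exact ⟨0, zero_mem _, by rw [map_zero, hφ v hv]⟩
  | mul a b ha hb =>
    obtain ⟨a', ha', hφa⟩ := ha
    obtain ⟨b', hb', hφb⟩ := hb
    exact ⟨a' * b', mul_mem ha' hb', by rw [map_mul, map_mul, hφa, hφb]⟩
  | add a b ha hb =>
    obtain ⟨a', ha', hφa⟩ := ha
    obtain ⟨b', hb', hφb⟩ := hb
    exact ⟨a' + b', add_mem ha' hb', by rw [map_add, map_add, hφa, hφb]⟩

noncomputable def shiftGenerators (g : σ → FreeAlgebra R σ) :
    FreeAlgebra R σ →ₐ[R] FreeAlgebra R σ :=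
  lift R fun v => ι R v + g v

/-- Each `g v` is a polynomial in the generators that `ι v ↦ ι v + g v` fixes, so the inverse of
that shift is `ι v ↦ ι v - g v`. -/
def IsTriangularShift (g : σ → FreeAlgebra R σ) : Prop :=
  ∀ v, g v ∈ Algebra.adjoin R (ι R '' {w | g w = 0})

@[simp]
theorem shiftGenerators_ι (g : σ → FreeAlgebra R σ) (v : σ) :
    shiftGenerators g (ι R v) = ι R v + g v :=
  lift_ι_apply _ _

theorem shiftGenerators_apply_of_mem_adjoin (g : σ → FreeAlgebra R σ) {a : FreeAlgebra R σ}
    (ha : a ∈ Algebra.adjoin R (ι R '' {w | g w = 0})) : shiftGenerators g a = a := by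
  refine (AlgHom.eqOn_adjoin_iff (ψ := AlgHom.id R _)).2 ?_ ha
  rintro _ ⟨w, hw, rfl⟩
  simpa using hw

theorem IsTriangularShift.of_forall_mem_adjoin {g : σ → FreeAlgebra R σ} (S : Set σ)
    (hS : ∀ v ∈ S, g v = 0) (hg : ∀ v, g v ∈ Algebra.adjoin R (ι R '' S)) :
    IsTriangularShift g :=
  fun v => Algebra.adjoin_mono (Set.image_mono hS) (hg v)

theorem IsTriangularShift.neg {g : σ → FreeAlgebra R σ} (hg : IsTriangularShift g) :
    IsTriangularShift (-g) := by
  simpa [IsTriangularShift] using hg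

theorem IsTriangularShift.shiftGenerators_comp_neg {g : σ → FreeAlgebra R σ}
    (hg : IsTriangularShift g) :
    (shiftGenerators g).comp (shiftGenerators (-g)) = AlgHom.id R _ := by
  ext v
  simp [shiftGenerators_apply_of_mem_adjoin g (hg v)]

noncomputable def shiftGeneratorsEquiv (g : σ → FreeAlgebra R σ) (hg : IsTriangularShift g) :
    FreeAlgebra R σ ≃ₐ[R] FreeAlgebra R σ :=
  .ofAlgHom (shiftGenerators g) (shiftGenerators (-g)) hg.shiftGenerators_comp_neg
    (by simpa using hg.neg.shiftGenerators_comp_neg)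

@[simp]
theorem shiftGeneratorsEquiv_apply (g : σ → FreeAlgebra R σ) (hg : IsTriangularShift g)
    (a : FreeAlgebra R σ) : shiftGeneratorsEquiv g hg a = shiftGenerators g a :=
  rfl

@[simp]
theorem shiftGeneratorsEquiv_symm_apply (g : σ → FreeAlgebra R σ) (hg : IsTriangularShift g)
    (a : FreeAlgebra R σ) : (shiftGeneratorsEquiv g hg).symm a = shiftGenerators (-g) a :=
  rfl

end FreeAlgebra
theorem surjective_homs_equivalent_general
    {K : Type} [Field K] {n m : ℕ}
    {C : Type} [Ring C] [Algebra K C]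
    (α γ : FreeAlgebra K (Fin n ⊕ Fin m) →ₐ[K] C)
    (hα : Function.Surjective α) (hγ : Function.Surjective γ)
    (hαy : ∀ j : Fin m, α (ι K (Sum.inr j)) = 0)
    (hγx : ∀ i : Fin n, γ (ι K (Sum.inl i)) = 0) :
    ∃ (g : Fin n → FreeAlgebra K (Fin n ⊕ Fin m))
      (f : Fin m → FreeAlgebra K (Fin n ⊕ Fin m)),
      (∀ i : Fin n, g i ∈ Algebra.adjoin K
        (Set.range fun j : Fin m => (ι K (Sum.inr j) : FreeAlgebra K (Fin n ⊕ Fin m)))) ∧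
      (∀ j : Fin m, f j ∈ Algebra.adjoin K
        (Set.range fun i : Fin n => (ι K (Sum.inl i) : FreeAlgebra K (Fin n ⊕ Fin m)))) ∧
      (∀ i : Fin n, α (ι K (Sum.inl i)) = γ (g i)) ∧
      (∀ j : Fin m, α (f j) = γ (ι K (Sum.inr j))) ∧
      ∃ τ : FreeAlgebra K (Fin n ⊕ Fin m) ≃ₐ[K] FreeAlgebra K (Fin n ⊕ Fin m),
        (∀ i : Fin n, τ (ι K (Sum.inl i)) = ι K (Sum.inl i) + g i) ∧
        (∀ a : FreeAlgebra K (Fin n ⊕ Fin m), α a = γ (τ a)) := by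
  have hY : (Set.range fun j : Fin m => (ι K (Sum.inr j) : FreeAlgebra K (Fin n ⊕ Fin m))) =
      ι K '' Set.range Sum.inr := Set.range_comp _ _
  have hX : (Set.range fun i : Fin n => (ι K (Sum.inl i) : FreeAlgebra K (Fin n ⊕ Fin m))) =
      ι K '' Set.range Sum.inl := Set.range_comp _ _
  have hg : ∀ i, ∃ b ∈ Algebra.adjoin K (ι K '' Set.range Sum.inr),
      γ b = α (ι K (Sum.inl i)) := fun i => by
    obtain ⟨a, ha⟩ := hγ (α (ι K (Sum.inl i)))
    refine ha ▸ exists_mem_adjoin_image_apply_eq γ ?_ a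
    rintro (i' | j) h
    exacts [hγx i', absurd ⟨j, rfl⟩ h]
  have hf : ∀ j, ∃ b ∈ Algebra.adjoin K (ι K '' Set.range Sum.inl),
      α b = γ (ι K (Sum.inr j)) := fun j => by
    obtain ⟨a, ha⟩ := hα (γ (ι K (Sum.inr j)))
    refine ha ▸ exists_mem_adjoin_image_apply_eq α ?_ a
    rintro (i | j') h
    exacts [absurd ⟨i, rfl⟩ h, hαy j']
  choose g hgY hgγ using hg
  choose f hfX hfα using hf
  have hσ₁ : IsTriangularShift (Sum.elim g 0) :=
    .of_forall_mem_adjoin (Set.range Sum.inr) (by rintro _ ⟨j, rfl⟩; rfl)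
      (by rintro (i | j); exacts [hgY i, zero_mem _])
  have hσ₂ : IsTriangularShift (Sum.elim 0 f) :=
    .of_forall_mem_adjoin (Set.range Sum.inl) (by rintro _ ⟨i, rfl⟩; rfl)
      (by rintro (i | j); exacts [zero_mem _, hfX j])
  have hγσ₁ : ∀ b ∈ Algebra.adjoin K (ι K '' Set.range Sum.inl),
      γ (shiftGenerators (Sum.elim g 0) b) = α b := by
    refine (AlgHom.eqOn_adjoin_iff (φ := γ.comp (shiftGenerators _))).2 ?_
    rintro _ ⟨_, ⟨i, rfl⟩, rfl⟩
    simp [hγx, hgγ]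
  let τ := (shiftGeneratorsEquiv _ hσ₂).symm.trans (shiftGeneratorsEquiv _ hσ₁)
  refine ⟨g, f, hY ▸ hgY, hX ▸ hfX, fun i => (hgγ i).symm, hfα, τ, fun i => by simp [τ],
    fun a => ?_⟩
  suffices α = γ.comp τ.toAlgHom from congr($this a)
  ext (i | j)
  · simp [τ, hγx, hgγ]
  · simp [τ, hγσ₁ _ (hfX j), hfα, hαy]

/-- Asanuma-type lemma (free associative version): if `α, γ : K⟨x₁,…,xₙ,y₁,…,y_m⟩ → C` are
surjective algebra homomorphisms with `α(y_j) = 0` and `γ(x_i) = 0`, then there exist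
`g_i ∈ K⟨y₁,…,y_m⟩` and `f_j ∈ K⟨x₁,…,xₙ⟩` with `α(x_i) = γ(g_i)`, `α(f_j) = γ(y_j)`, and an
automorphism `τ` with `τ(x_i) = x_i + g_i` and `α = γ ∘ τ`; in particular `α` is equivalent
to `γ`. -/
theorem surjective_homs_equivalent
    {K : Type} [Field K] {n m : ℕ} (hn : 1 ≤ n) (hm : 1 ≤ m)
    {C : Type} [Ring C] [Algebra K C]
    (α γ : FreeAlgebra K (Fin n ⊕ Fin m) →ₐ[K] C)
    (hα : Function.Surjective α) (hγ : Function.Surjective γ)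
    (hαy : ∀ j : Fin m, α (ι K (Sum.inr j)) = 0)
    (hγx : ∀ i : Fin n, γ (ι K (Sum.inl i)) = 0) :
    ∃ (g : Fin n → FreeAlgebra K (Fin n ⊕ Fin m))
      (f : Fin m → FreeAlgebra K (Fin n ⊕ Fin m)),
      (∀ i : Fin n, g i ∈ Algebra.adjoin K
        (Set.range fun j : Fin m => (ι K (Sum.inr j) : FreeAlgebra K (Fin n ⊕ Fin m)))) ∧
      (∀ j : Fin m, f j ∈ Algebra.adjoin K
        (Set.range fun i : Fin n => (ι K (Sum.inl i) : FreeAlgebra K (Fin n ⊕ Fin m)))) ∧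
      (∀ i : Fin n, α (ι K (Sum.inl i)) = γ (g i)) ∧
      (∀ j : Fin m, α (f j) = γ (ι K (Sum.inr j))) ∧
      ∃ τ : FreeAlgebra K (Fin n ⊕ Fin m) ≃ₐ[K] FreeAlgebra K (Fin n ⊕ Fin m),
        (∀ i : Fin n, τ (ι K (Sum.inl i)) = ι K (Sum.inl i) + g i) ∧
        (∀ a : FreeAlgebra K (Fin n ⊕ Fin m), α a = γ (τ a)) :=
  surjective_homs_equivalent_general α γ hα hγ hαy hγx
end

section
/- Let K be a field, n, m ≥ 1, A = FreeAlgebra K (Fin n ⊕ Fin m) with generators x_i = ι(inl i) and y_j = ι(inr j), and let C be an associative unital K-algebra that is generated as a K-algebra by some family of m elements. Let α, β : A →ₐ[K] C be surjective K-algebra homomorphisms with α(y_j) = β(y_j) = 0 for all j. Then α is equivalent to β: there exists a K-algebra automorphism τ of A with α = β ∘ τ. -/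
/-!
A homomorphism out of a free algebra is determined by its values on the generators. The
triangular automorphism `xᵢ ↦ xᵢ`, `yⱼ ↦ yⱼ + rⱼ(x)` keeps the values on the `x`'s and moves
the values on the `y`'s by arbitrary elements of the subalgebra generated by the values on the
`x`'s; symmetrically with `x` and `y` exchanged. With `aᵢ = α(xᵢ)`, `bᵢ = β(xᵢ)` and generators
`c` of `C`, each of the families `a`, `b`, `c` generates `C`, so three such moves lead from the
values `(b, 0)` of `β` through `(b, c)` and `(a, c)` to the values `(a, 0)` of `α`.
-/

namespace FreeAlgebra

variable {R : Type*} [CommRing R] {X Y : Type*}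

noncomputable def rename (f : X → Y) : FreeAlgebra R X →ₐ[R] FreeAlgebra R Y :=
  lift R (ι R ∘ f)

@[simp]
theorem rename_ι (f : X → Y) (x : X) : rename (R := R) f (ι R x) = ι R (f x) := by
  simp [rename]

noncomputable def renameEquiv (e : X ≃ Y) : FreeAlgebra R X ≃ₐ[R] FreeAlgebra R Y :=
  AlgEquiv.ofAlgHom (rename e) (rename e.symm) (by ext; simp) (by ext; simp)

@[simp]
theorem renameEquiv_ι (e : X ≃ Y) (x : X) : renameEquiv (R := R) e (ι R x) = ι R (e x) := by
  simp [renameEquiv]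

noncomputable def shiftInr (r : Y → FreeAlgebra R X) :
    FreeAlgebra R (X ⊕ Y) →ₐ[R] FreeAlgebra R (X ⊕ Y) :=
  lift R (Sum.elim (ι R ∘ Sum.inl) fun j => ι R (Sum.inr j) + rename Sum.inl (r j))

@[simp]
theorem shiftInr_ι_inl (r : Y → FreeAlgebra R X) (i : X) :
    shiftInr r (ι R (Sum.inl i)) = ι R (Sum.inl i) := by
  simp [shiftInr]

@[simp]
theorem shiftInr_ι_inr (r : Y → FreeAlgebra R X) (j : Y) :
    shiftInr r (ι R (Sum.inr j)) = ι R (Sum.inr j) + rename Sum.inl (r j) := by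
  simp [shiftInr]

theorem shiftInr_comp_rename_inl (r : Y → FreeAlgebra R X) :
    (shiftInr r).comp (rename Sum.inl) = rename Sum.inl := by
  ext; simp

@[simp]
theorem shiftInr_rename_inl (r : Y → FreeAlgebra R X) (a : FreeAlgebra R X) :
    shiftInr r (rename Sum.inl a) = rename Sum.inl a :=
  AlgHom.congr_fun (shiftInr_comp_rename_inl r) a

theorem shiftInr_comp_shiftInr (r s : Y → FreeAlgebra R X) :
    (shiftInr r).comp (shiftInr s) = shiftInr (r + s) := by
  ext (i | j) <;> simp [add_assoc]

theorem shiftInr_zero : shiftInr (0 : Y → FreeAlgebra R X) = AlgHom.id R _ := by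
  ext (i | j) <;> simp

noncomputable def shiftInrEquiv (r : Y → FreeAlgebra R X) :
    FreeAlgebra R (X ⊕ Y) ≃ₐ[R] FreeAlgebra R (X ⊕ Y) :=
  AlgEquiv.ofAlgHom (shiftInr r) (shiftInr (-r))
    (by rw [shiftInr_comp_shiftInr, add_neg_cancel, shiftInr_zero])
    (by rw [shiftInr_comp_shiftInr, neg_add_cancel, shiftInr_zero])

@[simp]
theorem shiftInrEquiv_apply (r : Y → FreeAlgebra R X) (a : FreeAlgebra R (X ⊕ Y)) :
    shiftInrEquiv r a = shiftInr r a :=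
  rfl

variable {C : Type*} [Ring C] [Algebra R C]

theorem exists_algEquiv_comp_eq_of_adjoin_inl_eq_top (φ ψ : FreeAlgebra R (X ⊕ Y) →ₐ[R] C)
    (h_inl : ∀ i, φ (ι R (Sum.inl i)) = ψ (ι R (Sum.inl i)))
    (h_gen : Algebra.adjoin R (Set.range fun i => φ (ι R (Sum.inl i))) = ⊤) :
    ∃ τ : FreeAlgebra R (X ⊕ Y) ≃ₐ[R] FreeAlgebra R (X ⊕ Y), ψ = φ.comp τ := by
  have hφ_inl : φ.comp (rename Sum.inl) = lift R fun i => φ (ι R (Sum.inl i)) := by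
    ext; simp
  have h_surj : Function.Surjective (φ.comp (rename Sum.inl)) := by
    rw [hφ_inl, ← AlgHom.range_eq_top, ← Algebra.adjoin_range_eq_range_freeAlgebra_lift, h_gen]
  choose r hr using fun j => h_surj (ψ (ι R (Sum.inr j)) - φ (ι R (Sum.inr j)))
  refine ⟨shiftInrEquiv r, ?_⟩
  ext (i | j)
  · simp [h_inl]
  · simp only [AlgHom.comp_apply] at hr
    simp [hr]

theorem exists_algEquiv_comp_eq_of_adjoin_inr_eq_top (φ ψ : FreeAlgebra R (X ⊕ Y) →ₐ[R] C)
    (h_inr : ∀ j, φ (ι R (Sum.inr j)) = ψ (ι R (Sum.inr j)))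
    (h_gen : Algebra.adjoin R (Set.range fun j => φ (ι R (Sum.inr j))) = ⊤) :
    ∃ τ : FreeAlgebra R (X ⊕ Y) ≃ₐ[R] FreeAlgebra R (X ⊕ Y), ψ = φ.comp τ := by
  let e : FreeAlgebra R (Y ⊕ X) ≃ₐ[R] FreeAlgebra R (X ⊕ Y) := renameEquiv (Equiv.sumComm Y X)
  obtain ⟨τ, hτ⟩ :=
    exists_algEquiv_comp_eq_of_adjoin_inl_eq_top (φ.comp e.toAlgHom) (ψ.comp e.toAlgHom)
    (by simpa [e] using h_inr) (by simpa [e] using h_gen)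
  refine ⟨e.symm.trans (τ.trans e), AlgHom.ext fun a => ?_⟩
  simpa using AlgHom.congr_fun hτ (e.symm a)

theorem adjoin_range_inl_eq_top_of_surjective (φ : FreeAlgebra R (X ⊕ Y) →ₐ[R] C)
    (hφ : Function.Surjective φ) (h_inr : ∀ j, φ (ι R (Sum.inr j)) = 0) :
    Algebra.adjoin R (Set.range fun i => φ (ι R (Sum.inl i))) = ⊤ := by
  have h_range : Set.range (φ ∘ ι R) ⊆ insert 0 (Set.range fun i => φ (ι R (Sum.inl i))) := by
    rintro _ ⟨i | j, rfl⟩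
    · exact Or.inr ⟨i, rfl⟩
    · exact Or.inl (h_inr j)
  rw [← Algebra.adjoin_insert_zero, eq_top_iff]
  calc ⊤ = Algebra.adjoin R (Set.range (φ ∘ ι R)) := by
        rw [Algebra.adjoin_range_eq_range_freeAlgebra_lift, lift_comp_ι,
          (AlgHom.range_eq_top φ).mpr hφ]
    _ ≤ _ := Algebra.adjoin_mono h_range

end FreeAlgebra

open FreeAlgebra

theorem surjective_homs_killing_y_equivalent_general
    {K : Type} [Field K] {n m : ℕ}
    {C : Type} [Ring C] [Algebra K C]
    (hC : ∃ c : Fin m → C, Algebra.adjoin K (Set.range c) = ⊤)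
    (α β : FreeAlgebra K (Fin n ⊕ Fin m) →ₐ[K] C)
    (hα : Function.Surjective α) (hβ : Function.Surjective β)
    (hαy : ∀ j : Fin m, α (ι K (Sum.inr j)) = 0)
    (hβy : ∀ j : Fin m, β (ι K (Sum.inr j)) = 0) :
    ∃ τ : FreeAlgebra K (Fin n ⊕ Fin m) ≃ₐ[K] FreeAlgebra K (Fin n ⊕ Fin m),
      ∀ a : FreeAlgebra K (Fin n ⊕ Fin m), α a = β (τ a) := by
  obtain ⟨c, hc⟩ := hC
  let γ₁ := lift K (Sum.elim (fun i => β (ι K (Sum.inl i))) c)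
  let γ₂ := lift K (Sum.elim (fun i => α (ι K (Sum.inl i))) c)
  obtain ⟨τ₁, h₁⟩ := exists_algEquiv_comp_eq_of_adjoin_inl_eq_top β γ₁ (by simp [γ₁])
    (adjoin_range_inl_eq_top_of_surjective β hβ hβy)
  obtain ⟨τ₂, h₂⟩ := exists_algEquiv_comp_eq_of_adjoin_inr_eq_top γ₁ γ₂ (by simp [γ₁, γ₂])
    (by simpa [γ₁] using hc)
  obtain ⟨τ₃, h₃⟩ := exists_algEquiv_comp_eq_of_adjoin_inl_eq_top γ₂ α (by simp [γ₂])
    (by simpa [γ₂] using adjoin_range_inl_eq_top_of_surjective α hα hαy)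
  refine ⟨τ₃.trans (τ₂.trans τ₁), fun a => ?_⟩
  calc α a = γ₂ (τ₃ a) := AlgHom.congr_fun h₃ a
    _ = γ₁ (τ₂ (τ₃ a)) := AlgHom.congr_fun h₂ _
    _ = β (τ₁ (τ₂ (τ₃ a))) := AlgHom.congr_fun h₁ _

/-- If `C` is generated as a `K`-algebra by `m` elements and
`α, β : K⟨x₁,…,xₙ,y₁,…,y_m⟩ → C` are surjective algebra homomorphisms annihilating all the
`y`-generators, then `α` and `β` are equivalent: `α = β ∘ τ` for some algebra automorphism
`τ` of the free algebra. -/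
theorem surjective_homs_killing_y_equivalent
    {K : Type} [Field K] {n m : ℕ} (hn : 1 ≤ n) (hm : 1 ≤ m)
    {C : Type} [Ring C] [Algebra K C]
    (hC : ∃ c : Fin m → C, Algebra.adjoin K (Set.range c) = ⊤)
    (α β : FreeAlgebra K (Fin n ⊕ Fin m) →ₐ[K] C)
    (hα : Function.Surjective α) (hβ : Function.Surjective β)
    (hαy : ∀ j : Fin m, α (ι K (Sum.inr j)) = 0)
    (hβy : ∀ j : Fin m, β (ι K (Sum.inr j)) = 0) :
    ∃ τ : FreeAlgebra K (Fin n ⊕ Fin m) ≃ₐ[K] FreeAlgebra K (Fin n ⊕ Fin m),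
      ∀ a : FreeAlgebra K (Fin n ⊕ Fin m), α a = β (τ a) :=
  surjective_homs_killing_y_equivalent_general hC α β hα hβ hαy hβy
end

section
/- Let K be a field, n, m ≥ 1, A = FreeAlgebra K (Fin n), and let I and J be two-sided ideals of A such that the quotient K-algebras A/I and A/J are isomorphic as K-algebras and A/I is generated as a K-algebra by m elements. Let B = FreeAlgebra K (Fin n ⊕ Fin m), let κ : A →ₐ[K] B be the canonical embedding sending the i-th generator of A to x_i = ι(inl i), and let Ī (resp. J̄) be the two-sided ideal of B generated by κ(I) (resp. κ(J)) together with the generators y_1, …, y_m (y_j = ι(inr j)). Then Ī is equivalent to J̄: there exists a K-algebra automorphism σ of B with σ(Ī) = J̄. -/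
/-!
Write `B = K⟨X ⊕ Y⟩`. The ideal of `B` generated by an ideal `I` of `K⟨X⟩` and the variables
`y` is the preimage of `I` under the retraction `B → K⟨X⟩`, `y ↦ 0`, hence the kernel of
`B → K⟨X⟩ → Q` for any `f : K⟨X⟩ → Q` with kernel `I`. If also `g : K⟨Y⟩ → Q` is surjective,
choose `p x ∈ K⟨Y⟩` with `g (p x) = f x` and `u y ∈ K⟨X⟩` with `f (u y) = g y`; the triangular
automorphism `x ↦ x + p x`, `y ↦ y - u (x + p x)` of `B` carries `g ∘ (x ↦ 0)` to `f ∘ (y ↦ 0)`.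
Doing this for `A → A/I ≅ A/J` and for `A → A/J`, against one `m`-generator presentation of
`A/J`, and composing, gives the automorphism.
-/

open FreeAlgebra

/-- The quotient of a (possibly noncommutative) `K`-algebra by a two-sided ideal,
realized via `RingQuot`. -/
abbrev TwoSidedIdeal.quotAlg (K : Type) {A : Type} [Field K] [Ring A] [Algebra K A]
    (I : TwoSidedIdeal A) : Type :=
  RingQuot (fun a b : A => a - b ∈ I)

namespace TwoSidedIdeal

variable {R A : Type*} [CommSemiring R] [Ring A] [Algebra R A]

theorem mkₐ_ringCon_eq_zero_iff (I : TwoSidedIdeal A) (a : A) :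
    I.ringCon.mkₐ R a = 0 ↔ a ∈ I := by
  rw [mem_iff, ← RingCon.eq]
  rfl

theorem mkAlgHom_sub_mem_eq_zero_iff (I : TwoSidedIdeal A) (a : A) :
    RingQuot.mkAlgHom R (fun a b : A => a - b ∈ I) a = 0 ↔ a ∈ I := by
  refine ⟨fun h => ?_, fun h => ?_⟩
  · have hI : ∀ ⦃x y : A⦄, x - y ∈ I → I.ringCon.mkₐ R x = I.ringCon.mkₐ R y :=
      fun x y hxy => (RingCon.eq _).mpr ((I.rel_iff x y).mpr hxy)
    rw [← mkₐ_ringCon_eq_zero_iff (R := R), ← RingQuot.liftAlgHom_mkAlgHom_apply R _ hI, h,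
      map_zero]
  · rw [RingQuot.mkAlgHom_rel R (y := 0) (by rwa [sub_zero]), map_zero]

end TwoSidedIdeal

namespace FreeAlgebra

variable (K : Type*) [CommRing K] {X Y : Type*}

noncomputable def inl : FreeAlgebra K X →ₐ[K] FreeAlgebra K (X ⊕ Y) :=
  lift K fun x => ι K (Sum.inl x)

noncomputable def inr : FreeAlgebra K Y →ₐ[K] FreeAlgebra K (X ⊕ Y) :=
  lift K fun y => ι K (Sum.inr y)

noncomputable def retractInl : FreeAlgebra K (X ⊕ Y) →ₐ[K] FreeAlgebra K X :=
  lift K (Sum.elim (ι K) 0)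

noncomputable def retractInr : FreeAlgebra K (X ⊕ Y) →ₐ[K] FreeAlgebra K Y :=
  lift K (Sum.elim 0 (ι K))

variable {K}

@[simp] theorem inl_ι (x : X) : inl K (Y := Y) (ι K x) = ι K (Sum.inl x) := lift_ι_apply _ _

@[simp] theorem inr_ι (y : Y) : inr K (X := X) (ι K y) = ι K (Sum.inr y) := lift_ι_apply _ _

@[simp] theorem retractInl_ι_inl (x : X) : retractInl K (Y := Y) (ι K (Sum.inl x)) = ι K x :=
  lift_ι_apply _ _

@[simp] theorem retractInl_ι_inr (y : Y) : retractInl K (X := X) (ι K (Sum.inr y)) = 0 :=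
  lift_ι_apply _ _

@[simp] theorem retractInr_ι_inl (x : X) : retractInr K (Y := Y) (ι K (Sum.inl x)) = 0 :=
  lift_ι_apply _ _

@[simp] theorem retractInr_ι_inr (y : Y) : retractInr K (X := X) (ι K (Sum.inr y)) = ι K y :=
  lift_ι_apply _ _

@[simp] theorem retractInl_inl (a : FreeAlgebra K X) : retractInl K (inl K (Y := Y) a) = a := by
  have : (retractInl K).comp (inl K (Y := Y)) = AlgHom.id K (FreeAlgebra K X) :=
    hom_ext (funext fun x => by simp)
  exact AlgHom.congr_fun this a

@[simp] theorem retractInr_inr (b : FreeAlgebra K Y) : retractInr K (inr K (X := X) b) = b := by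
  have : (retractInr K).comp (inr K (X := X)) = AlgHom.id K (FreeAlgebra K Y) :=
    hom_ext (funext fun y => by simp)
  exact AlgHom.congr_fun this b

noncomputable def shearInrHom (u : Y → FreeAlgebra K X) :
    FreeAlgebra K (X ⊕ Y) →ₐ[K] FreeAlgebra K (X ⊕ Y) :=
  lift K (Sum.elim (fun x => ι K (Sum.inl x)) fun y => ι K (Sum.inr y) + inl K (u y))

@[simp] theorem shearInrHom_ι_inl (u : Y → FreeAlgebra K X) (x : X) :
    shearInrHom u (ι K (Sum.inl x)) = ι K (Sum.inl x) :=
  lift_ι_apply _ _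

@[simp] theorem shearInrHom_ι_inr (u : Y → FreeAlgebra K X) (y : Y) :
    shearInrHom u (ι K (Sum.inr y)) = ι K (Sum.inr y) + inl K (u y) :=
  lift_ι_apply _ _

@[simp] theorem shearInrHom_inl (u : Y → FreeAlgebra K X) (a : FreeAlgebra K X) :
    shearInrHom u (inl K a) = inl K a := by
  have : (shearInrHom u).comp (inl K) = inl K := hom_ext (funext fun x => by simp)
  exact AlgHom.congr_fun this a

noncomputable def shearInr (u : Y → FreeAlgebra K X) :
    FreeAlgebra K (X ⊕ Y) ≃ₐ[K] FreeAlgebra K (X ⊕ Y) :=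
  AlgEquiv.ofAlgHom (shearInrHom u) (shearInrHom (-u))
    (hom_ext (funext fun | .inl x => by simp | .inr y => by simp))
    (hom_ext (funext fun | .inl x => by simp | .inr y => by simp))

noncomputable def shearInlHom (p : X → FreeAlgebra K Y) :
    FreeAlgebra K (X ⊕ Y) →ₐ[K] FreeAlgebra K (X ⊕ Y) :=
  lift K (Sum.elim (fun x => ι K (Sum.inl x) + inr K (p x)) fun y => ι K (Sum.inr y))

@[simp] theorem shearInlHom_ι_inl (p : X → FreeAlgebra K Y) (x : X) :
    shearInlHom p (ι K (Sum.inl x)) = ι K (Sum.inl x) + inr K (p x) :=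
  lift_ι_apply _ _

@[simp] theorem shearInlHom_ι_inr (p : X → FreeAlgebra K Y) (y : Y) :
    shearInlHom p (ι K (Sum.inr y)) = ι K (Sum.inr y) :=
  lift_ι_apply _ _

@[simp] theorem shearInlHom_inr (p : X → FreeAlgebra K Y) (b : FreeAlgebra K Y) :
    shearInlHom p (inr K b) = inr K b := by
  have : (shearInlHom p).comp (inr K) = inr K := hom_ext (funext fun y => by simp)
  exact AlgHom.congr_fun this b

noncomputable def shearInl (p : X → FreeAlgebra K Y) :
    FreeAlgebra K (X ⊕ Y) ≃ₐ[K] FreeAlgebra K (X ⊕ Y) :=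
  AlgEquiv.ofAlgHom (shearInlHom p) (shearInlHom (-p))
    (hom_ext (funext fun | .inl x => by simp | .inr y => by simp))
    (hom_ext (funext fun | .inl x => by simp | .inr y => by simp))

theorem mem_span_inl_union_range_iff (I : TwoSidedIdeal (FreeAlgebra K X))
    (b : FreeAlgebra K (X ⊕ Y)) :
    b ∈ TwoSidedIdeal.span
        (inl K '' (I : Set (FreeAlgebra K X)) ∪ Set.range fun y => ι K (Sum.inr y))
      ↔ retractInl K b ∈ I := by
  set T := TwoSidedIdeal.span
    (inl K '' (I : Set (FreeAlgebra K X)) ∪ Set.range fun y => ι K (Sum.inr y))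
  constructor
  · intro hb
    have hT : T ≤ I.comap (retractInl K) := by
      refine TwoSidedIdeal.span_le.mpr (Set.union_subset ?_ ?_)
      · rintro _ ⟨a, ha, rfl⟩
        simpa [TwoSidedIdeal.mem_comap] using ha
      · rintro _ ⟨y, rfl⟩
        simp [TwoSidedIdeal.mem_comap, I.zero_mem]
    exact (TwoSidedIdeal.mem_comap _).mp (hT hb)
  · intro hb
    have hq : (T.ringCon.mkₐ K).comp ((inl K).comp (retractInl K)) = T.ringCon.mkₐ K := by
      refine hom_ext (funext fun | .inl x => by simp | .inr y => ?_)
      simp only [Function.comp_apply, AlgHom.comp_apply, retractInl_ι_inr, map_zero]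
      exact ((TwoSidedIdeal.mkₐ_ringCon_eq_zero_iff T _).mpr
        (TwoSidedIdeal.subset_span (Or.inr ⟨y, rfl⟩))).symm
    rw [← TwoSidedIdeal.mkₐ_ringCon_eq_zero_iff (R := K), ← AlgHom.congr_fun hq b,
      AlgHom.comp_apply, TwoSidedIdeal.mkₐ_ringCon_eq_zero_iff]
    exact TwoSidedIdeal.subset_span (Or.inl ⟨_, hb, rfl⟩)

variable {Q : Type*} [Ring Q] [Algebra K Q]

theorem exists_algEquiv_retractInr_eq_retractInl (f : FreeAlgebra K X →ₐ[K] Q)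
    (g : FreeAlgebra K Y →ₐ[K] Q) (hf : Function.Surjective f) (hg : Function.Surjective g) :
    ∃ σ : FreeAlgebra K (X ⊕ Y) ≃ₐ[K] FreeAlgebra K (X ⊕ Y),
      ∀ b, g (retractInr K (σ b)) = f (retractInl K b) := by
  choose u hu using fun y => hf (g (ι K y))
  choose p hp using fun x => hg (f (ι K x))
  have hpx : (g.comp (retractInr K)).comp ((shearInlHom p).comp (inl K)) = f :=
    hom_ext (funext fun x => by simp [hp])
  refine ⟨(shearInr (-u)).trans (shearInl p), fun b => ?_⟩
  have key : (g.comp (retractInr K)).comp ((shearInlHom p).comp (shearInrHom (-u))) =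
      f.comp (retractInl K) := by
    refine hom_ext (funext fun | .inl x => by simp [hp] | .inr y => ?_)
    have hpu := AlgHom.congr_fun hpx (u y)
    simp only [AlgHom.comp_apply] at hpu
    simp [hpu, hu]
  exact AlgHom.congr_fun key b

theorem exists_algEquiv_retractInl_eq_retractInl (f₁ f₂ : FreeAlgebra K X →ₐ[K] Q)
    (hf₁ : Function.Surjective f₁) (hf₂ : Function.Surjective f₂)
    (g : FreeAlgebra K Y →ₐ[K] Q) (hg : Function.Surjective g) :
    ∃ σ : FreeAlgebra K (X ⊕ Y) ≃ₐ[K] FreeAlgebra K (X ⊕ Y),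
      ∀ b, f₂ (retractInl K (σ b)) = f₁ (retractInl K b) := by
  obtain ⟨σ₁, hσ₁⟩ := exists_algEquiv_retractInr_eq_retractInl f₁ g hf₁ hg
  obtain ⟨σ₂, hσ₂⟩ := exists_algEquiv_retractInr_eq_retractInl f₂ g hf₂ hg
  refine ⟨σ₁.trans σ₂.symm, fun b => ?_⟩
  rw [← hσ₁, ← σ₂.apply_symm_apply (σ₁ b), hσ₂]
  rfl

end FreeAlgebra

theorem extended_ideals_equivalent_general
    {K : Type} [Field K] {n m : ℕ}
    (I J : TwoSidedIdeal (FreeAlgebra K (Fin n)))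
    (hiso : Nonempty (I.quotAlg K ≃ₐ[K] J.quotAlg K))
    (hgen : ∃ c : Fin m → I.quotAlg K, Algebra.adjoin K (Set.range c) = ⊤) :
    ∃ σ : FreeAlgebra K (Fin n ⊕ Fin m) ≃ₐ[K] FreeAlgebra K (Fin n ⊕ Fin m),
      ∀ b : FreeAlgebra K (Fin n ⊕ Fin m),
        b ∈ TwoSidedIdeal.span
            ((FreeAlgebra.lift K fun i : Fin n =>
                (ι K (Sum.inl i) : FreeAlgebra K (Fin n ⊕ Fin m))) '' (I : Set (FreeAlgebra K (Fin n)))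
              ∪ Set.range fun j : Fin m => (ι K (Sum.inr j) : FreeAlgebra K (Fin n ⊕ Fin m)))
        ↔ σ b ∈ TwoSidedIdeal.span
            ((FreeAlgebra.lift K fun i : Fin n =>
                (ι K (Sum.inl i) : FreeAlgebra K (Fin n ⊕ Fin m))) '' (J : Set (FreeAlgebra K (Fin n)))
              ∪ Set.range fun j : Fin m => (ι K (Sum.inr j) : FreeAlgebra K (Fin n ⊕ Fin m))) := by
  obtain ⟨φ⟩ := hiso
  obtain ⟨c, hc⟩ := hgen
  rw [Algebra.adjoin_range_eq_range_freeAlgebra_lift, AlgHom.range_eq_top] at hc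
  let πI := RingQuot.mkAlgHom K fun a b : FreeAlgebra K (Fin n) => a - b ∈ I
  let πJ := RingQuot.mkAlgHom K fun a b : FreeAlgebra K (Fin n) => a - b ∈ J
  obtain ⟨σ, hσ⟩ := exists_algEquiv_retractInl_eq_retractInl (φ.toAlgHom.comp πI) πJ
    (φ.surjective.comp (RingQuot.mkAlgHom_surjective K _)) (RingQuot.mkAlgHom_surjective K _)
    (φ.toAlgHom.comp (lift K c)) (φ.surjective.comp hc)
  refine ⟨σ, fun b => ?_⟩
  calc b ∈ _ ↔ retractInl K b ∈ I := mem_span_inl_union_range_iff I b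
    _ ↔ φ (πI (retractInl K b)) = 0 := by
      rw [map_eq_zero_iff φ φ.injective, TwoSidedIdeal.mkAlgHom_sub_mem_eq_zero_iff]
    _ ↔ πJ (retractInl K (σ b)) = 0 := by rw [hσ]; rfl
    _ ↔ retractInl K (σ b) ∈ J := TwoSidedIdeal.mkAlgHom_sub_mem_eq_zero_iff J _
    _ ↔ σ b ∈ _ := (mem_span_inl_union_range_iff J (σ b)).symm

/-- If `I` and `J` are two-sided ideals of the free algebra `A = K⟨x₁,…,xₙ⟩` with `A/I ≅ A/J`
as `K`-algebras and `A/I` generated by `m` elements, then the two-sided ideals `⟨I, y₁,…,y_m⟩`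
and `⟨J, y₁,…,y_m⟩` of `K⟨x₁,…,xₙ,y₁,…,y_m⟩` are equivalent: some algebra automorphism `σ`
of the larger free algebra maps the one onto the other. -/
theorem extended_ideals_equivalent
    {K : Type} [Field K] {n m : ℕ} (hn : 1 ≤ n) (hm : 1 ≤ m)
    (I J : TwoSidedIdeal (FreeAlgebra K (Fin n)))
    (hiso : Nonempty (I.quotAlg K ≃ₐ[K] J.quotAlg K))
    (hgen : ∃ c : Fin m → I.quotAlg K, Algebra.adjoin K (Set.range c) = ⊤) :
    ∃ σ : FreeAlgebra K (Fin n ⊕ Fin m) ≃ₐ[K] FreeAlgebra K (Fin n ⊕ Fin m),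
      ∀ b : FreeAlgebra K (Fin n ⊕ Fin m),
        b ∈ TwoSidedIdeal.span
            ((FreeAlgebra.lift K fun i : Fin n =>
                (ι K (Sum.inl i) : FreeAlgebra K (Fin n ⊕ Fin m))) '' (I : Set (FreeAlgebra K (Fin n)))
              ∪ Set.range fun j : Fin m => (ι K (Sum.inr j) : FreeAlgebra K (Fin n ⊕ Fin m)))
        ↔ σ b ∈ TwoSidedIdeal.span
            ((FreeAlgebra.lift K fun i : Fin n =>
                (ι K (Sum.inl i) : FreeAlgebra K (Fin n ⊕ Fin m))) '' (J : Set (FreeAlgebra K (Fin n)))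
              ∪ Set.range fun j : Fin m => (ι K (Sum.inr j) : FreeAlgebra K (Fin n ⊕ Fin m))) :=
  extended_ideals_equivalent_general I J hiso hgen
end
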